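/- arXiv:1407.1600 — 7 statements merged into one kernel-verified Lean document; each statement's English description precedes it below -/
import Mathlib

section
/- Let E : ℝ → ℝ be concave on the interval [0,1] and concave on the interval [1,2], with E(0) = 0 and E(2) ≤ 2·E(1). Then for every ε ∈ [0,1], E(1+ε) + E(1−ε) ≥ E(2). -/
/-! Interpolating between the endpoints of each interval gives the chord bounds
`E (1 - ε) ≥ (1 - ε) E(1)` and `E (1 + ε) ≥ (1 - ε) E(1) + ε E(2)`, whose sum exceeds `E(2)` by
`(1 - ε) (2 E(1) - E(2)) ≥ 0`. -/

open Set

lemma ConcaveOn.chord_le_of_Icc {f : ℝ → ℝ} {a b t : ℝ} (hf : ConcaveOn ℝ (Icc a b) f)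
    (hab : a ≤ b) (ht₀ : 0 ≤ t) (ht₁ : t ≤ 1) :
    (1 - t) * f a + t * f b ≤ f ((1 - t) * a + t * b) :=
  hf.2 (left_mem_Icc.2 hab) (right_mem_Icc.2 hab) (by linarith) ht₀ (by ring)

/-- If `E : ℝ → ℝ` is concave on `[0,1]` and on `[1,2]`, with `E 0 = 0` and
`E 2 ≤ 2 * E 1`, then for every `ε ∈ [0,1]` one has `E (1+ε) + E (1-ε) ≥ E 2`. -/
theorem concave_no_binding_inequality
    (E : ℝ → ℝ)
    (h01 : ConcaveOn ℝ (Set.Icc (0 : ℝ) 1) E)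
    (h12 : ConcaveOn ℝ (Set.Icc (1 : ℝ) 2) E)
    (hE0 : E 0 = 0)
    (hE2 : E 2 ≤ 2 * E 1) :
    ∀ ε ∈ Set.Icc (0 : ℝ) 1, E 2 ≤ E (1 + ε) + E (1 - ε) := by
  rintro ε ⟨hε₀, hε₁⟩
  have hleft : (1 - ε) * E 1 ≤ E (1 - ε) := by
    have := h01.chord_le_of_Icc zero_le_one (sub_nonneg.2 hε₁) (sub_le_self 1 hε₀)
    simpa [hE0] using this
  have hright : (1 - ε) * E 1 + ε * E 2 ≤ E (1 + ε) := by
    have := h12.chord_le_of_Icc one_le_two hε₀ hε₁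
    rwa [show (1 - ε) * 1 + ε * 2 = 1 + ε by ring] at this
  calc E 2 ≤ E 2 + (1 - ε) * (2 * E 1 - E 2) :=
        le_add_of_nonneg_right (mul_nonneg (sub_nonneg.2 hε₁) (sub_nonneg.2 hE2))
    _ = ((1 - ε) * E 1 + ε * E 2) + (1 - ε) * E 1 := by ring
    _ ≤ E (1 + ε) + E (1 - ε) := add_le_add hright hleft
end

section
/- Let (X, μ) be a measure space and f, g ∈ L²(X, μ; ℂ) with ‖f‖_{L²} = ‖g‖_{L²} = 1 and ∫_X conj(f) g dμ = 0. Then for every measurable set S ⊆ X, | ∫_S conj(f) g dμ | ≤ 1/2. -/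
/-!
As `∫ conj f · g = 0`, the integrals of `conj f · g` over `S` and over `Sᶜ` are opposite, so they
have the same modulus `t`. Writing `a, b` for the masses of `|f|², |g|²` on `S`, Cauchy–Schwarz and
AM–GM on `S` and on `Sᶜ` give `t ≤ (a + b) / 2` and `t ≤ ((1 - a) + (1 - b)) / 2`; adding, `2 t ≤ 1`.
-/

open MeasureTheory

section InnerProduct

variable {α 𝕜 E : Type*} [MeasurableSpace α] {μ : Measure α} [RCLike 𝕜]
  [NormedAddCommGroup E] [InnerProductSpace 𝕜 E] {f g : α → E}

local notation "⟪" x ", " y "⟫" => inner 𝕜 x y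

theorem MeasureTheory.MemLp.inner_coeFn_toLp_ae_eq (hf : MemLp f 2 μ) (hg : MemLp g 2 μ) :
    (fun x => ⟪hf.toLp f x, hg.toLp g x⟫) =ᵐ[μ] fun x => ⟪f x, g x⟫ := by
  filter_upwards [hf.coeFn_toLp, hg.coeFn_toLp] with x hfx hgx
  rw [hfx, hgx]

theorem MeasureTheory.MemLp.integrable_inner (hf : MemLp f 2 μ) (hg : MemLp g 2 μ) :
    Integrable (fun x => ⟪f x, g x⟫) μ :=
  (L2.integrable_inner _ _).congr (hf.inner_coeFn_toLp_ae_eq hg)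

theorem MeasureTheory.L2.inner_toLp (hf : MemLp f 2 μ) (hg : MemLp g 2 μ) :
    ⟪hf.toLp f, hg.toLp g⟫ = ∫ x, ⟪f x, g x⟫ ∂μ :=
  integral_congr_ae (hf.inner_coeFn_toLp_ae_eq hg)

theorem MeasureTheory.sq_norm_integral_inner_le (hf : MemLp f 2 μ) (hg : MemLp g 2 μ) :
    ‖∫ x, ⟪f x, g x⟫ ∂μ‖ ^ 2 ≤ (∫ x, ‖f x‖ ^ 2 ∂μ) * ∫ x, ‖g x‖ ^ 2 ∂μ := by
  have sq_norm_toLp {h : α → E} (hh : MemLp h 2 μ) : ‖hh.toLp h‖ ^ 2 = ∫ x, ‖h x‖ ^ 2 ∂μ := by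
    rw [@norm_sq_eq_re_inner 𝕜, L2.inner_toLp]
    simp_rw [inner_self_eq_norm_sq_to_K]
    norm_cast
  rw [← L2.inner_toLp hf hg, ← sq_norm_toLp hf, ← sq_norm_toLp hg, ← mul_pow]
  exact pow_le_pow_left₀ (norm_nonneg _) (norm_inner_le_norm _ _) 2

end InnerProduct

theorem le_add_div_two_of_sq_le_mul {t a b : ℝ} (hab : 0 ≤ a + b) (h : t ^ 2 ≤ a * b) :
    t ≤ (a + b) / 2 :=
  le_of_abs_le <| abs_le_of_sq_le_sq (by nlinarith [sq_nonneg (a - b)]) (by linarith)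

/-- If `f, g` are unit vectors of `L²(X, μ; ℂ)` that are orthogonal, then for every
measurable set `S` the partial inner product `∫_S conj f · g` has modulus at most `1/2`. -/
theorem abs_setIntegral_conj_mul_le_half
    {X : Type*} [MeasurableSpace X] (μ : Measure X) (f g : X → ℂ)
    (hf : MemLp f 2 μ) (hg : MemLp g 2 μ)
    (hfnorm : ∫ x, ‖f x‖ ^ 2 ∂μ = 1) (hgnorm : ∫ x, ‖g x‖ ^ 2 ∂μ = 1)
    (horth : ∫ x, (starRingEnd ℂ) (f x) * g x ∂μ = 0)
    (S : Set X) (hS : MeasurableSet S) :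
    ‖∫ x in S, (starRingEnd ℂ) (f x) * g x ∂μ‖ ≤ 1 / 2 := by
  simp_rw [mul_comm ((starRingEnd ℂ) _), ← RCLike.inner_apply] at horth ⊢
  have hIc : ∫ x in Sᶜ, inner ℂ (f x) (g x) ∂μ = -∫ x in S, inner ℂ (f x) (g x) ∂μ := by
    rw [setIntegral_compl hS (hf.integrable_inner (𝕜 := ℂ) hg), horth, zero_sub]
  have hf_split := integral_add_compl hS (hf.integrable_norm_pow two_ne_zero)
  have hg_split := integral_add_compl hS (hg.integrable_norm_pow two_ne_zero)
  have hS_bound := le_add_div_two_of_sq_le_mul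
    (add_nonneg (integral_nonneg fun _ => by positivity) (integral_nonneg fun _ => by positivity))
    (sq_norm_integral_inner_le (𝕜 := ℂ) (hf.restrict S) (hg.restrict S))
  have hSc_bound := le_add_div_two_of_sq_le_mul
    (add_nonneg (integral_nonneg fun _ => by positivity) (integral_nonneg fun _ => by positivity))
    (sq_norm_integral_inner_le (𝕜 := ℂ) (hf.restrict Sᶜ) (hg.restrict Sᶜ))
  rw [hIc, norm_neg] at hSc_bound
  linarith
end

section
/- Let f, g ∈ L²(ℝ³, ℂ) with ‖f‖_{L²} = ‖g‖_{L²} = 1 and ∫_{ℝ³} conj(f) g = 0, and let r > 0. Then ∬_{\{(x,y) : |x−y| < r\}} |f(x)g(y) − g(x)f(y)|² / |x−y| dx dy ≥ (1/r) · ( 2 ∬_{\{(x,y) : |x−y| < r\}} |f(x)|² |g(y)|² dx dy − 1 ). -/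
/-!
Expanding `|f(x)g(y) − g(x)f(y)|²` gives `|f(x)|²|g(y)|² + |g(x)|²|f(y)|²` minus twice the real
part of a cross term whose total integral is `|⟨f, g⟩|² = 0`, so the squared kernel has total
mass `2`. Off the strip `{|x − y| < r}` the kernel is at most twice the sum of the two product
densities, whose mass there is `2 − 2I` by the symmetry of the strip, where
`I = ∬_{|x−y|<r} |f(x)|²|g(y)|²`. Hence its mass on the strip is at least `4I − 2`, which
dominates `2I − 1` whenever the latter is positive, and `1/|x − y| > 1/r` on the strip.
-/

open MeasureTheory

noncomputable section

abbrev R3 : Type := EuclideanSpace ℝ (Fin 3)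

open ComplexConjugate

lemma Complex.norm_mul_sub_mul_sq (a b c d : ℂ) :
    ‖a * b - c * d‖ ^ 2 =
      ‖a‖ ^ 2 * ‖b‖ ^ 2 + ‖c‖ ^ 2 * ‖d‖ ^ 2 - 2 * (a * conj c * (b * conj d)).re := by
  simp only [Complex.sq_norm, Complex.normSq_sub, Complex.normSq_mul]
  congr 3
  simp only [map_mul]
  ring

lemma norm_sub_sq_le_two_mul {E : Type*} [SeminormedAddCommGroup E] (a b : E) :
    ‖a - b‖ ^ 2 ≤ 2 * (‖a‖ ^ 2 + ‖b‖ ^ 2) :=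
  (pow_le_pow_left₀ (norm_nonneg _) (norm_sub_le a b) 2).trans add_sq_le

def slaterDet {α : Type*} (f g : α → ℂ) (z : α × α) : ℂ := f z.1 * g z.2 - g z.1 * f z.2

section Slater

variable {α : Type*} {f g : α → ℂ}

lemma slaterDet_diag (f g : α → ℂ) (x : α) : slaterDet f g (x, x) = 0 := by
  simp [slaterDet, mul_comm]

lemma norm_slaterDet_sq_le (f g : α → ℂ) (z : α × α) :
    ‖slaterDet f g z‖ ^ 2 ≤ 2 * (‖f z.1‖ ^ 2 * ‖g z.2‖ ^ 2 + ‖g z.1‖ ^ 2 * ‖f z.2‖ ^ 2) :=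
  (norm_sub_sq_le_two_mul _ _).trans_eq (by simp only [norm_mul, mul_pow])

variable [MeasurableSpace α] {μ : Measure α}

lemma integrable_norm_sq_mul_prod (hf : MemLp f 2 μ) (hg : MemLp g 2 μ) :
    Integrable (fun z : α × α => ‖f z.1‖ ^ 2 * ‖g z.2‖ ^ 2) (μ.prod μ) :=
  (hf.integrable_norm_pow two_ne_zero).mul_prod (hg.integrable_norm_pow two_ne_zero)

lemma integrable_norm_slaterDet_sq (hf : MemLp f 2 μ) (hg : MemLp g 2 μ) :
    Integrable (fun z => ‖slaterDet f g z‖ ^ 2) (μ.prod μ) := by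
  refine (((integrable_norm_sq_mul_prod hf hg).add
    (integrable_norm_sq_mul_prod hg hf)).const_mul 2).mono' ?_
    (.of_forall fun z => ?_)
  · exact ((hf.1.comp_fst.mul hg.1.comp_snd).sub (hg.1.comp_fst.mul hf.1.comp_snd)).norm.pow 2
  · simpa only [Pi.add_apply, Real.norm_eq_abs, abs_pow, abs_norm] using norm_slaterDet_sq_le f g z

variable [SFinite μ]

lemma integral_norm_sq_mul_prod (f g : α → ℂ) :
    ∫ z, ‖f z.1‖ ^ 2 * ‖g z.2‖ ^ 2 ∂μ.prod μ = (∫ x, ‖f x‖ ^ 2 ∂μ) * ∫ x, ‖g x‖ ^ 2 ∂μ :=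
  integral_prod_mul (fun x => ‖f x‖ ^ 2) (fun y => ‖g y‖ ^ 2)

lemma integral_norm_sq_mul_prod_add_swap (hf : MemLp f 2 μ) (hg : MemLp g 2 μ)
    (hfnorm : ∫ x, ‖f x‖ ^ 2 ∂μ = 1) (hgnorm : ∫ x, ‖g x‖ ^ 2 ∂μ = 1) :
    ∫ z, (‖f z.1‖ ^ 2 * ‖g z.2‖ ^ 2 + ‖g z.1‖ ^ 2 * ‖f z.2‖ ^ 2) ∂μ.prod μ = 2 := by
  rw [integral_add (integrable_norm_sq_mul_prod hf hg) (integrable_norm_sq_mul_prod hg hf),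
    integral_norm_sq_mul_prod, integral_norm_sq_mul_prod, hfnorm, hgnorm]
  norm_num

theorem integral_norm_slaterDet_sq (hf : MemLp f 2 μ) (hg : MemLp g 2 μ)
    (hfnorm : ∫ x, ‖f x‖ ^ 2 ∂μ = 1) (hgnorm : ∫ x, ‖g x‖ ^ 2 ∂μ = 1)
    (horth : ∫ x, conj (f x) * g x ∂μ = 0) :
    ∫ z, ‖slaterDet f g z‖ ^ 2 ∂μ.prod μ = 2 := by
  have hsum : Integrable (fun z : α × α => ‖f z.1‖ ^ 2 * ‖g z.2‖ ^ 2 + ‖g z.1‖ ^ 2 * ‖f z.2‖ ^ 2)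
      (μ.prod μ) := (integrable_norm_sq_mul_prod hf hg).add (integrable_norm_sq_mul_prod hg hf)
  have hcross : Integrable (fun z : α × α => f z.1 * conj (g z.1) * (g z.2 * conj (f z.2)))
      (μ.prod μ) :=
    (hf.integrable_mul hg.star).mul_prod (hg.integrable_mul hf.star)
  have hcross_zero : ∫ z, f z.1 * conj (g z.1) * (g z.2 * conj (f z.2)) ∂μ.prod μ = 0 := by
    have horth' : ∫ y, g y * conj (f y) ∂μ = 0 := by simpa only [mul_comm] using horth
    rw [integral_prod_mul (fun x => f x * conj (g x)) (fun y => g y * conj (f y)), horth',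
      mul_zero]
  calc ∫ z, ‖slaterDet f g z‖ ^ 2 ∂μ.prod μ
      = ∫ z, (‖f z.1‖ ^ 2 * ‖g z.2‖ ^ 2 + ‖g z.1‖ ^ 2 * ‖f z.2‖ ^ 2
          - 2 * RCLike.re (f z.1 * conj (g z.1) * (g z.2 * conj (f z.2)))) ∂μ.prod μ := by
        congr 1; ext z; exact Complex.norm_mul_sub_mul_sq _ _ _ _
    _ = 2 := by
        rw [integral_sub hsum (hcross.re.const_mul 2), integral_const_mul, integral_re hcross,
          hcross_zero, integral_norm_sq_mul_prod_add_swap hf hg hfnorm hgnorm]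
        simp

theorem two_mul_setIntegral_sub_two_le (hf : MemLp f 2 μ) (hg : MemLp g 2 μ)
    (hfnorm : ∫ x, ‖f x‖ ^ 2 ∂μ = 1) (hgnorm : ∫ x, ‖g x‖ ^ 2 ∂μ = 1)
    (horth : ∫ x, conj (f x) * g x ∂μ = 0) {S : Set (α × α)} (hS : MeasurableSet S) :
    2 * ∫ z in S, (‖f z.1‖ ^ 2 * ‖g z.2‖ ^ 2 + ‖g z.1‖ ^ 2 * ‖f z.2‖ ^ 2) ∂μ.prod μ - 2 ≤
      ∫ z in S, ‖slaterDet f g z‖ ^ 2 ∂μ.prod μ := by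
  have hQ := integrable_norm_slaterDet_sq hf hg
  have hsum : Integrable (fun z : α × α => ‖f z.1‖ ^ 2 * ‖g z.2‖ ^ 2 + ‖g z.1‖ ^ 2 * ‖f z.2‖ ^ 2)
      (μ.prod μ) := (integrable_norm_sq_mul_prod hf hg).add (integrable_norm_sq_mul_prod hg hf)
  have hQ_total : ∫ z in S, ‖slaterDet f g z‖ ^ 2 ∂μ.prod μ
      + ∫ z in Sᶜ, ‖slaterDet f g z‖ ^ 2 ∂μ.prod μ = 2 := by
    rw [integral_add_compl hS hQ, integral_norm_slaterDet_sq hf hg hfnorm hgnorm horth]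
  have hsum_total : ∫ z in S, (‖f z.1‖ ^ 2 * ‖g z.2‖ ^ 2 + ‖g z.1‖ ^ 2 * ‖f z.2‖ ^ 2) ∂μ.prod μ
      + ∫ z in Sᶜ, (‖f z.1‖ ^ 2 * ‖g z.2‖ ^ 2 + ‖g z.1‖ ^ 2 * ‖f z.2‖ ^ 2) ∂μ.prod μ = 2 := by
    rw [integral_add_compl hS hsum, integral_norm_sq_mul_prod_add_swap hf hg hfnorm hgnorm]
  have hcompl : ∫ z in Sᶜ, ‖slaterDet f g z‖ ^ 2 ∂μ.prod μ
      ≤ 2 * ∫ z in Sᶜ, (‖f z.1‖ ^ 2 * ‖g z.2‖ ^ 2 + ‖g z.1‖ ^ 2 * ‖f z.2‖ ^ 2) ∂μ.prod μ := by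
    rw [← integral_const_mul]
    exact setIntegral_mono hQ.integrableOn (hsum.const_mul 2).integrableOn
      (norm_slaterDet_sq_le f g)
  linarith

lemma setIntegral_comp_swap {E : Type*} [NormedAddCommGroup E] [NormedSpace ℝ E]
    {S : Set (α × α)} (hS : Prod.swap ⁻¹' S = S) (F : α × α → E) :
    ∫ z in S, F z.swap ∂μ.prod μ = ∫ z in S, F z ∂μ.prod μ := by
  simpa only [hS] using Measure.measurePreserving_swap.setIntegral_preimage_emb
    MeasurableEquiv.prodComm.measurableEmbedding F S

theorem four_mul_setIntegral_sub_two_le (hf : MemLp f 2 μ) (hg : MemLp g 2 μ)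
    (hfnorm : ∫ x, ‖f x‖ ^ 2 ∂μ = 1) (hgnorm : ∫ x, ‖g x‖ ^ 2 ∂μ = 1)
    (horth : ∫ x, conj (f x) * g x ∂μ = 0) {S : Set (α × α)} (hS : MeasurableSet S)
    (hswap : Prod.swap ⁻¹' S = S) :
    4 * ∫ z in S, ‖f z.1‖ ^ 2 * ‖g z.2‖ ^ 2 ∂μ.prod μ - 2 ≤
      ∫ z in S, ‖slaterDet f g z‖ ^ 2 ∂μ.prod μ := by
  have hsymm : ∫ z in S, ‖g z.1‖ ^ 2 * ‖f z.2‖ ^ 2 ∂μ.prod μ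
      = ∫ z in S, ‖f z.1‖ ^ 2 * ‖g z.2‖ ^ 2 ∂μ.prod μ := by
    simpa only [Prod.fst_swap, Prod.snd_swap, mul_comm] using
      setIntegral_comp_swap hswap (fun z : α × α => ‖f z.1‖ ^ 2 * ‖g z.2‖ ^ 2)
  have := two_mul_setIntegral_sub_two_le hf hg hfnorm hgnorm horth hS
  rw [integral_add (integrable_norm_sq_mul_prod hf hg).integrableOn
    (integrable_norm_sq_mul_prod hg hf).integrableOn, hsymm] at this
  linarith

end Slater

lemma ofReal_norm_slaterDet_sq_div_le {E : Type*} [NormedAddCommGroup E] (f g : E → ℂ) {r : ℝ}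
    {z : E × E} (hz : ‖z.1 - z.2‖ < r) :
    ENNReal.ofReal (‖slaterDet f g z‖ ^ 2 / r)
      ≤ ENNReal.ofReal (‖slaterDet f g z‖ ^ 2 / ‖z.1 - z.2‖) := by
  obtain ⟨x, y⟩ := z
  rcases (norm_nonneg (x - y)).eq_or_lt with hxy | hxy
  -- on the diagonal the right side divides by `0`, but the kernel vanishes there
  · obtain rfl : x = y := sub_eq_zero.mp (norm_eq_zero.mp hxy.symm)
    simp [slaterDet_diag]
  · exact ENNReal.ofReal_le_ofReal (div_le_div_of_nonneg_left (by positivity) hxy hz.le)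

/-- For orthonormal `f, g ∈ L²(ℝ³, ℂ)` and `r > 0`, the exchange-type integral of the
Slater kernel `f(x)g(y) − g(x)f(y)` over `{|x−y| < r}` is bounded from below by
`(1/r)·(2∬_{|x−y|<r} |f(x)|²|g(y)|² − 1)`. -/
theorem slater_exchange_lower_bound
    (f g : R3 → ℂ) (hf : MemLp f 2) (hg : MemLp g 2)
    (hfnorm : ∫ x, ‖f x‖ ^ 2 = 1) (hgnorm : ∫ x, ‖g x‖ ^ 2 = 1)
    (horth : ∫ x, (starRingEnd ℂ) (f x) * g x = 0)
    (r : ℝ) (hr : 0 < r) :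
    ENNReal.ofReal
        ((1 / r) *
          (2 * (∫ z in {z : R3 × R3 | ‖z.1 - z.2‖ < r}, ‖f z.1‖ ^ 2 * ‖g z.2‖ ^ 2) - 1))
      ≤ ∫⁻ z in {z : R3 × R3 | ‖z.1 - z.2‖ < r},
          ENNReal.ofReal (‖f z.1 * g z.2 - g z.1 * f z.2‖ ^ 2 / ‖z.1 - z.2‖) := by
  set S := {z : R3 × R3 | ‖z.1 - z.2‖ < r}
  have hS : MeasurableSet S := (isOpen_lt (by fun_prop) continuous_const).measurableSet
  have hswap : Prod.swap ⁻¹' S = S := by ext z; simp [S, norm_sub_rev]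
  rw [Measure.volume_eq_prod]
  have hlow := four_mul_setIntegral_sub_two_le hf hg hfnorm hgnorm horth hS hswap
  have hnonneg : 0 ≤ ∫ z in S, ‖slaterDet f g z‖ ^ 2 ∂volume.prod volume :=
    setIntegral_nonneg hS fun _ _ => by positivity
  calc _ ≤ ENNReal.ofReal (∫ z in S, ‖slaterDet f g z‖ ^ 2 / r ∂volume.prod volume) := by
        rw [integral_div, one_div_mul_eq_div]
        exact ENNReal.ofReal_le_ofReal (div_le_div_of_nonneg_right (by linarith) hr.le)
    _ = ∫⁻ z in S, ENNReal.ofReal (‖slaterDet f g z‖ ^ 2 / r) ∂volume.prod volume :=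
        ofReal_integral_eq_lintegral_ofReal
          ((integrable_norm_slaterDet_sq hf hg).div_const r).integrableOn
          (ae_of_all _ fun _ => by positivity)
    _ ≤ _ := setLIntegral_mono' hS fun z hz => ofReal_norm_slaterDet_sq_div_le f g hz
end
end

section
/- Let σ₁, σ₂, σ₃ be the standard 2×2 Pauli matrices, and define the 4×4 Dirac matrices β := [[I₂, 0],[0, −I₂]] and αⱼ := [[0, σⱼ],[σⱼ, 0]] for j = 1,2,3. Set E(p) := √(1+|p|²) and s_p := ( Σ_{j=1}^{3} pⱼ αⱼ + β ) / E(p) ∈ M₄(ℂ) for p ∈ ℝ³. Then for all p, q ∈ ℝ³: ‖I₄ − s_p s_q‖ ≤ ‖s_p − s_q‖ ≤ 2|p−q| / max(E(p), E(q)), where ‖·‖ is the operator norm on ℂ⁴. -/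
/-!
The Dirac matrices satisfy the Clifford relations `αᵢαⱼ + αⱼαᵢ = 2δᵢⱼ`, `αⱼβ + βαⱼ = 0`,
`β² = 1`, so `M(v, c) = Σ vⱼ αⱼ + c β` is Hermitian with `M(v, c)² = (|v|² + c²) I`, and the
C⋆-identity gives `‖M(v, c)‖ = √(|v|² + c²)`. Hence `s_p = M(p, 1) / ‖M(p, 1)‖` with
`‖M(p, 1)‖ = E(p)`, `s_p² = 1` and `M(p, 1) - M(q, 1) = M(p - q, 0)` of norm `|p - q|`.
The first inequality is `1 - s_p s_q = s_p (s_p - s_q)` with `‖s_p‖ = 1`; the second is the bound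
`‖x/‖x‖ - y/‖y‖‖ ≤ 2‖x - y‖ / max(‖x‖, ‖y‖)`, valid in any normed space.
-/

open Matrix Real

noncomputable section

/-- The three Pauli matrices. -/
def pauli : Fin 3 → Matrix (Fin 2) (Fin 2) ℂ
  | 0 => !![0, 1; 1, 0]
  | 1 => !![0, -Complex.I; Complex.I, 0]
  | 2 => !![1, 0; 0, -1]

/-- The Dirac matrix `β = [[I₂, 0], [0, −I₂]]`. -/
def diracBeta : Matrix (Fin 4) (Fin 4) ℂ :=
  Matrix.reindex finSumFinEquiv finSumFinEquiv
    (Matrix.fromBlocks (1 : Matrix (Fin 2) (Fin 2) ℂ) (0 : Matrix (Fin 2) (Fin 2) ℂ)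
      (0 : Matrix (Fin 2) (Fin 2) ℂ) (-1 : Matrix (Fin 2) (Fin 2) ℂ))

/-- The Dirac matrices `αⱼ = [[0, σⱼ], [σⱼ, 0]]`. -/
def diracAlpha (j : Fin 3) : Matrix (Fin 4) (Fin 4) ℂ :=
  Matrix.reindex finSumFinEquiv finSumFinEquiv
    (Matrix.fromBlocks (0 : Matrix (Fin 2) (Fin 2) ℂ) (pauli j) (pauli j)
      (0 : Matrix (Fin 2) (Fin 2) ℂ))

/-- `E(p) = √(1+|p|²)`. -/
def Efun (p : R3) : ℝ := Real.sqrt (1 + ‖p‖ ^ 2)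

/-- The symbol `s_p = (Σ pⱼ αⱼ + β)/E(p)` of `sign(D⁰)`. -/
def signSymbol (p : R3) : Matrix (Fin 4) (Fin 4) ℂ :=
  (((Efun p)⁻¹ : ℝ) : ℂ) • (∑ j, ((p j : ℝ) : ℂ) • diracAlpha j + diracBeta)

/-- Operator norm (on `ℂ⁴`) of a `4 × 4` complex matrix. -/
def opNorm4 (A : Matrix (Fin 4) (Fin 4) ℂ) : ℝ :=
  ‖Matrix.toEuclideanCLM (𝕜 := ℂ) A‖

section Anticommute

variable {R A ι : Type*} [CommRing R] [Ring A] [Algebra R A]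

def Anticommute (a b : A) : Prop := a * b + b * a = 0

namespace Anticommute

variable {a b : A}

theorem eq (h : Anticommute a b) : a * b + b * a = 0 := h

theorem symm (h : Anticommute a b) : Anticommute b a := by
  rw [Anticommute, add_comm]; exact h

theorem smul_left (h : Anticommute a b) (r : R) : Anticommute (r • a) b := by
  rw [Anticommute, smul_mul_assoc, mul_smul_comm, ← smul_add, h, smul_zero]

theorem smul_right (h : Anticommute a b) (r : R) : Anticommute a (r • b) :=
  (h.symm.smul_left r).symm

theorem sum_left {s : Finset ι} {f : ι → A} (h : ∀ i ∈ s, Anticommute (f i) b) :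
    Anticommute (∑ i ∈ s, f i) b := by
  rw [Anticommute, Finset.sum_mul, Finset.mul_sum, ← Finset.sum_add_distrib]
  exact Finset.sum_eq_zero h

theorem add_mul_self (h : Anticommute a b) : (a + b) * (a + b) = a * a + b * b := by
  rw [← add_zero (a * a + b * b), ← h.eq]
  noncomm_ring

end Anticommute

theorem sum_smul_mul_self_of_anticommute [DecidableEq ι] (s : Finset ι) (x : ι → R)
    (e : ι → A) (hsq : ∀ i ∈ s, e i * e i = 1)
    (hanti : ∀ i ∈ s, ∀ j ∈ s, i ≠ j → Anticommute (e i) (e j)) :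
    (∑ i ∈ s, x i • e i) * (∑ i ∈ s, x i • e i) = algebraMap R A (∑ i ∈ s, x i ^ 2) := by
  induction s using Finset.induction_on with
  | empty => simp
  | insert k s hk ih =>
    have hcross : Anticommute (x k • e k) (∑ i ∈ s, x i • e i) :=
      (Anticommute.sum_left fun i hi => ((hanti i (by simp [hi]) k (by simp)
        (by rintro rfl; exact hk hi)).smul_left (x i)).smul_right (x k)).symm
    rw [Finset.sum_insert hk, Finset.sum_insert hk, hcross.add_mul_self,
      ih (fun i hi => hsq i (by simp [hi]))
        (fun i hi j hj => hanti i (by simp [hi]) j (by simp [hj])),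
      smul_mul_smul_comm, hsq k (by simp), map_add, Algebra.algebraMap_eq_smul_one (x k ^ 2), sq]

end Anticommute

lemma pauli_mul_self (j : Fin 3) : pauli j * pauli j = 1 := by
  fin_cases j <;> simp [pauli, one_fin_two]

lemma anticommute_pauli {i j : Fin 3} (hij : i ≠ j) : Anticommute (pauli i) (pauli j) := by
  fin_cases i <;> fin_cases j <;>
    simp_all [Anticommute, pauli, eta_fin_two (0 : Matrix (Fin 2) (Fin 2) ℂ)]

lemma isHermitian_pauli (j : Fin 3) : (pauli j).IsHermitian := by
  fin_cases j <;> simp [IsHermitian, pauli, eta_fin_two (_ᴴ)]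

lemma diracAlpha_mul_self (j : Fin 3) : diracAlpha j * diracAlpha j = 1 := by
  simp [diracAlpha, reindex_apply, submatrix_mul_equiv, fromBlocks_multiply, pauli_mul_self]

lemma diracBeta_mul_self : diracBeta * diracBeta = 1 := by
  simp [diracBeta, reindex_apply, submatrix_mul_equiv, fromBlocks_multiply]

lemma anticommute_diracAlpha {i j : Fin 3} (hij : i ≠ j) :
    Anticommute (diracAlpha i) (diracAlpha j) := by
  simp only [Anticommute, diracAlpha, ← coe_reindexAlgEquiv ℂ ℂ, ← map_mul, ← map_add,
    fromBlocks_multiply, fromBlocks_add]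
  simp [(anticommute_pauli hij).eq]

lemma anticommute_diracAlpha_diracBeta (j : Fin 3) :
    Anticommute (diracAlpha j) diracBeta := by
  simp only [Anticommute, diracAlpha, diracBeta, ← coe_reindexAlgEquiv ℂ ℂ, ← map_mul, ← map_add,
    fromBlocks_multiply, fromBlocks_add]
  simp

lemma isHermitian_diracAlpha (j : Fin 3) : (diracAlpha j).IsHermitian :=
  (isHermitian_zero.fromBlocks (isHermitian_pauli j) isHermitian_zero).reindex _

lemma isHermitian_diracBeta : diracBeta.IsHermitian :=
  (isHermitian_one.fromBlocks conjTranspose_zero isHermitian_one.neg).reindex _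

def diracSymbol (v : R3) (c : ℝ) : Matrix (Fin 4) (Fin 4) ℂ :=
  ∑ j, ((v j : ℝ) : ℂ) • diracAlpha j + (c : ℂ) • diracBeta

lemma diracSymbol_sub (v w : R3) (c d : ℝ) :
    diracSymbol v c - diracSymbol w d = diracSymbol (v - w) (c - d) := by
  simp only [diracSymbol, PiLp.sub_apply, Complex.ofReal_sub, sub_smul, Finset.sum_sub_distrib]
  abel

lemma diracSymbol_mul_self (v : R3) (c : ℝ) :
    diracSymbol v c * diracSymbol v c = algebraMap ℂ _ ((‖v‖ ^ 2 + c ^ 2 : ℝ) : ℂ) := by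
  have hα := sum_smul_mul_self_of_anticommute Finset.univ (fun j => ((v j : ℝ) : ℂ))
    diracAlpha (fun j _ => diracAlpha_mul_self j)
    (fun i _ j _ hij => anticommute_diracAlpha hij)
  have hαβ : Anticommute (∑ j, ((v j : ℝ) : ℂ) • diracAlpha j) ((c : ℂ) • diracBeta) :=
    Anticommute.sum_left fun j _ => ((anticommute_diracAlpha_diracBeta j).smul_left _).smul_right _
  rw [diracSymbol, hαβ.add_mul_self, hα, smul_mul_smul_comm, diracBeta_mul_self,
    EuclideanSpace.norm_sq_eq]
  simp [Algebra.algebraMap_eq_smul_one, add_smul, sq, Finset.sum_smul]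

lemma isSelfAdjoint_diracSymbol (v : R3) (c : ℝ) : IsSelfAdjoint (diracSymbol v c) :=
  .add (isSelfAdjoint_sum _ fun j _ => (isHermitian_diracAlpha j).smul (Complex.conj_ofReal _))
    (isHermitian_diracBeta.smul (Complex.conj_ofReal _))

section NormalizedDifference

variable {𝕜 E : Type*} [RCLike 𝕜] [NormedAddCommGroup E] [NormedSpace 𝕜 E]

theorem norm_inv_norm_smul_sub_inv_norm_smul_le_of_ne_zero {x : E} (hx : x ≠ 0) (y : E) :
    ‖(‖x‖⁻¹ : 𝕜) • x - (‖y‖⁻¹ : 𝕜) • y‖ ≤ 2 * ‖x - y‖ / ‖x‖ := by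
  have hx' : 0 < ‖x‖ := norm_pos_iff.mpr hx
  have hsplit : (‖x‖⁻¹ : 𝕜) • x - (‖y‖⁻¹ : 𝕜) • y
      = (‖x‖⁻¹ : 𝕜) • (x - y) + ((‖x‖⁻¹ - ‖y‖⁻¹ : ℝ) : 𝕜) • y := by
    simp only [RCLike.ofReal_sub, RCLike.ofReal_inv, smul_sub, sub_smul]
    abel
  have hscale : |‖x‖⁻¹ - ‖y‖⁻¹| * ‖y‖ ≤ ‖x - y‖ / ‖x‖ := by
    rcases eq_or_ne y 0 with rfl | hy
    · simp only [norm_zero, mul_zero]; positivity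
    have hy' : 0 < ‖y‖ := norm_pos_iff.mpr hy
    calc |‖x‖⁻¹ - ‖y‖⁻¹| * ‖y‖ = |‖x‖ - ‖y‖| / ‖x‖ := by
          rw [inv_sub_inv hx'.ne' hy'.ne', abs_div, abs_of_pos (mul_pos hx' hy'), abs_sub_comm]
          field_simp
      _ ≤ ‖x - y‖ / ‖x‖ := by gcongr; exact abs_norm_sub_norm_le x y
  calc ‖(‖x‖⁻¹ : 𝕜) • x - (‖y‖⁻¹ : 𝕜) • y‖
      ≤ ‖x‖⁻¹ * ‖x - y‖ + |‖x‖⁻¹ - ‖y‖⁻¹| * ‖y‖ := by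
        rw [hsplit]
        refine (norm_add_le _ _).trans_eq ?_
        rw [norm_smul, norm_smul, norm_inv, RCLike.norm_ofReal, RCLike.norm_ofReal, abs_norm]
    _ ≤ ‖x - y‖ / ‖x‖ + ‖x - y‖ / ‖x‖ := by rw [inv_mul_eq_div]; gcongr
    _ = 2 * ‖x - y‖ / ‖x‖ := by ring

theorem norm_inv_norm_smul_sub_inv_norm_smul_le (x y : E) :
    ‖(‖x‖⁻¹ : 𝕜) • x - (‖y‖⁻¹ : 𝕜) • y‖ ≤ 2 * ‖x - y‖ / max ‖x‖ ‖y‖ := by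
  wlog hyx : ‖y‖ ≤ ‖x‖ generalizing x y
  · rw [norm_sub_rev, norm_sub_rev x, max_comm]
    exact this y x (le_of_not_ge hyx)
  rw [max_eq_left hyx]
  rcases eq_or_ne x 0 with rfl | hx
  · obtain rfl : y = 0 := norm_le_zero_iff.mp (by simpa using hyx)
    simp
  exact norm_inv_norm_smul_sub_inv_norm_smul_le_of_ne_zero hx y

end NormalizedDifference

lemma Efun_pos (p : R3) : 0 < Efun p := Real.sqrt_pos.mpr (by positivity)

section L2OperatorNorm

open scoped Matrix.Norms.L2Operator

lemma opNorm4_eq_norm (A : Matrix (Fin 4) (Fin 4) ℂ) : opNorm4 A = ‖A‖ :=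
  (cstar_norm_def A).symm

lemma norm_diracSymbol (v : R3) (c : ℝ) : ‖diracSymbol v c‖ = √(‖v‖ ^ 2 + c ^ 2) := by
  have h := (isSelfAdjoint_diracSymbol v c).norm_mul_self
  rw [diracSymbol_mul_self, norm_algebraMap', Complex.norm_real,
    Real.norm_of_nonneg (by positivity)] at h
  rw [h, Real.sqrt_sq (norm_nonneg _)]

lemma norm_diracSymbol_one (p : R3) : ‖diracSymbol p 1‖ = Efun p := by
  rw [norm_diracSymbol, Efun, one_pow, add_comm]

lemma signSymbol_eq_inv_norm_smul (p : R3) :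
    signSymbol p = (‖diracSymbol p 1‖⁻¹ : ℂ) • diracSymbol p 1 := by
  rw [norm_diracSymbol_one]
  simp [signSymbol, diracSymbol]

lemma signSymbol_mul_self (p : R3) : signSymbol p * signSymbol p = 1 := by
  have hsq : (‖p‖ ^ 2 + 1 ^ 2 : ℝ) = ‖diracSymbol p 1‖ ^ 2 := by
    rw [norm_diracSymbol, Real.sq_sqrt (by positivity)]
  have hM : (‖diracSymbol p 1‖ : ℂ) ≠ 0 := by
    rw [norm_diracSymbol_one]; exact_mod_cast (Efun_pos p).ne'
  rw [signSymbol_eq_inv_norm_smul, smul_mul_smul_comm, diracSymbol_mul_self, hsq,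
    Algebra.smul_def, ← map_mul, ← map_one (algebraMap ℂ (Matrix (Fin 4) (Fin 4) ℂ))]
  congr 1
  push_cast
  field_simp

lemma norm_signSymbol (p : R3) : ‖signSymbol p‖ = 1 := by
  rw [signSymbol_eq_inv_norm_smul]
  refine norm_smul_inv_norm ?_
  rw [← norm_pos_iff, norm_diracSymbol_one]
  exact Efun_pos p

lemma norm_one_sub_signSymbol_mul_le (p q : R3) :
    ‖1 - signSymbol p * signSymbol q‖ ≤ ‖signSymbol p - signSymbol q‖ :=
  calc ‖1 - signSymbol p * signSymbol q‖ = ‖signSymbol p * (signSymbol p - signSymbol q)‖ := by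
        rw [mul_sub, signSymbol_mul_self]
    _ ≤ ‖signSymbol p‖ * ‖signSymbol p - signSymbol q‖ := norm_mul_le _ _
    _ = ‖signSymbol p - signSymbol q‖ := by rw [norm_signSymbol, one_mul]

lemma norm_signSymbol_sub_le (p q : R3) :
    ‖signSymbol p - signSymbol q‖ ≤ 2 * ‖p - q‖ / max (Efun p) (Efun q) :=
  calc ‖signSymbol p - signSymbol q‖
      = ‖(‖diracSymbol p 1‖⁻¹ : ℂ) • diracSymbol p 1
          - (‖diracSymbol q 1‖⁻¹ : ℂ) • diracSymbol q 1‖ := by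
        rw [signSymbol_eq_inv_norm_smul, signSymbol_eq_inv_norm_smul]
    _ ≤ 2 * ‖diracSymbol p 1 - diracSymbol q 1‖ / max ‖diracSymbol p 1‖ ‖diracSymbol q 1‖ :=
        norm_inv_norm_smul_sub_inv_norm_smul_le _ _
    _ = 2 * ‖p - q‖ / max (Efun p) (Efun q) := by
        rw [diracSymbol_sub, sub_self, norm_diracSymbol, norm_diracSymbol_one, norm_diracSymbol_one,
          zero_pow two_ne_zero, add_zero, Real.sqrt_sq (norm_nonneg _)]

end L2OperatorNorm

/-- `‖1 − s_p s_q‖ ≤ ‖s_p − s_q‖ ≤ 2|p−q| / max(E(p), E(q))`. -/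
theorem signSymbol_difference_bound (p q : R3) :
    opNorm4 (1 - signSymbol p * signSymbol q) ≤ opNorm4 (signSymbol p - signSymbol q)
      ∧ opNorm4 (signSymbol p - signSymbol q) ≤ 2 * ‖p - q‖ / max (Efun p) (Efun q) := by
  simp only [opNorm4_eq_norm]
  exact ⟨norm_one_sub_signSymbol_mul_le p q, norm_signSymbol_sub_le p q⟩
end
end

section
/- For every Λ ≥ e and every p ∈ ℝ³, with E(t) := √(1+t²): E(|p|)^{1 + 1/log Λ} ≤ E(Λ)^{1/log Λ} · E(|p|) · (1 + |p|²/Λ²) ≤ (1 + e) · E(|p|) · (1 + |p|²/Λ²). -/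
/-!
Write `t = 1 / log Λ ∈ (0, 1]`. Since `(1 + Λ²)(1 + q²/Λ²) ≥ 1 + q²`, one has
`√(1+q²) ≤ √(1+Λ²)(1 + q²/Λ²)`; raising to the power `t ≤ 1` does not increase the factor
`1 + q²/Λ² ≥ 1`, and multiplying by `√(1+q²)` gives the first inequality.
For the second, `√(1+Λ²) ≤ Λ(1 + 1/Λ²)` and `Λ^{1/log Λ} = e`, so
`√(1+Λ²)^t ≤ e(1 + 1/Λ²) ≤ e + 1` as `Λ² ≥ e`.
-/

open Real

noncomputable section

namespace Real

lemma rpow_le_rpow_mul_of_le_mul {x y c t : ℝ} (hx : 0 ≤ x) (hy : 0 ≤ y) (hc : 1 ≤ c)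
    (ht₀ : 0 ≤ t) (ht₁ : t ≤ 1) (h : x ≤ y * c) : x ^ t ≤ y ^ t * c :=
  calc x ^ t ≤ (y * c) ^ t := rpow_le_rpow hx h ht₀
    _ = y ^ t * c ^ t := mul_rpow hy (by linarith)
    _ ≤ y ^ t * c := by gcongr; exact rpow_le_self_of_one_le hc ht₁

lemma sqrt_one_add_sq_le_mul (Λ q : ℝ) (hΛ : Λ ≠ 0) :
    √(1 + q ^ 2) ≤ √(1 + Λ ^ 2) * (1 + q ^ 2 / Λ ^ 2) := by
  have hc : 0 ≤ q ^ 2 / Λ ^ 2 := by positivity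
  have hexpand : (1 + Λ ^ 2) * (1 + q ^ 2 / Λ ^ 2) = 1 + q ^ 2 + Λ ^ 2 + q ^ 2 / Λ ^ 2 := by
    field_simp
    ring
  rw [sqrt_le_left (by positivity), mul_pow, sq_sqrt (by positivity)]
  nlinarith [sq_nonneg Λ]

lemma sqrt_one_add_sq_le_mul_one_add_inv_sq {Λ : ℝ} (hΛ : 0 < Λ) :
    √(1 + Λ ^ 2) ≤ Λ * (1 + 1 / Λ ^ 2) := by
  rw [sqrt_le_left (by positivity)]
  have hexpand : (Λ * (1 + 1 / Λ ^ 2)) ^ 2 = Λ ^ 2 + 2 + 1 / Λ ^ 2 := by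
    field_simp
    ring
  rw [hexpand]
  linarith [show 0 ≤ 1 / Λ ^ 2 by positivity]

lemma sqrt_one_add_sq_rpow_inv_log_le {Λ : ℝ} (hΛ : exp 1 ≤ Λ) :
    √(1 + Λ ^ 2) ^ (1 / log Λ) ≤ 1 + exp 1 := by
  have hΛ₀ : 0 < Λ := (exp_pos 1).trans_le hΛ
  have hlog : 1 ≤ log Λ := (le_log_iff_exp_le hΛ₀).2 hΛ
  have hΛ_sq : exp 1 ≤ Λ ^ 2 := by nlinarith [add_one_le_exp (1 : ℝ)]
  calc √(1 + Λ ^ 2) ^ (1 / log Λ) ≤ Λ ^ (1 / log Λ) * (1 + 1 / Λ ^ 2) :=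
        rpow_le_rpow_mul_of_le_mul (sqrt_nonneg _) hΛ₀.le
          (le_add_of_nonneg_right (by positivity)) (by positivity)
          ((div_le_one (by linarith)).2 hlog) (sqrt_one_add_sq_le_mul_one_add_inv_sq hΛ₀)
    _ ≤ exp 1 * (1 + 1 / Λ ^ 2) := by
        gcongr
        rw [one_div]
        exact rpow_inv_log_le_exp_one
    _ = exp 1 + exp 1 / Λ ^ 2 := by ring
    _ ≤ 1 + exp 1 := by
        rw [add_comm 1]
        gcongr
        exact (div_le_one (by positivity)).2 hΛ_sq

end Real

/-- Comparison of the symbols of `|D⁰|^{1+1/log Λ}` and of `|𝐃| = |D⁰|(1 − Δ/Λ²)`: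
for `Λ ≥ e` and all `p ∈ ℝ³`, with `E(t) = √(1+t²)`,
`E(|p|)^{1+1/log Λ} ≤ E(Λ)^{1/log Λ} E(|p|)(1+|p|²/Λ²) ≤ (1+e) E(|p|)(1+|p|²/Λ²)`. -/
theorem symbol_cutoff_comparison
    (Λ : ℝ) (hΛ : Real.exp 1 ≤ Λ) (p : R3) :
    Real.sqrt (1 + ‖p‖ ^ 2) ^ ((1 : ℝ) + 1 / Real.log Λ)
        ≤ Real.sqrt (1 + Λ ^ 2) ^ ((1 : ℝ) / Real.log Λ)
            * Real.sqrt (1 + ‖p‖ ^ 2) * (1 + ‖p‖ ^ 2 / Λ ^ 2)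
      ∧ Real.sqrt (1 + Λ ^ 2) ^ ((1 : ℝ) / Real.log Λ)
            * Real.sqrt (1 + ‖p‖ ^ 2) * (1 + ‖p‖ ^ 2 / Λ ^ 2)
          ≤ (1 + Real.exp 1) * (Real.sqrt (1 + ‖p‖ ^ 2) * (1 + ‖p‖ ^ 2 / Λ ^ 2)) := by
  have hΛ₀ : 0 < Λ := (exp_pos 1).trans_le hΛ
  have hlog : 1 ≤ log Λ := (le_log_iff_exp_le hΛ₀).2 hΛ
  have hE : 0 < √(1 + ‖p‖ ^ 2) := sqrt_pos.2 (by positivity)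
  refine ⟨?_, ?_⟩
  · calc √(1 + ‖p‖ ^ 2) ^ (1 + 1 / log Λ) = √(1 + ‖p‖ ^ 2) * √(1 + ‖p‖ ^ 2) ^ (1 / log Λ) := by
          rw [rpow_add hE, rpow_one]
      _ ≤ √(1 + ‖p‖ ^ 2) * (√(1 + Λ ^ 2) ^ (1 / log Λ) * (1 + ‖p‖ ^ 2 / Λ ^ 2)) := by
          gcongr
          exact rpow_le_rpow_mul_of_le_mul hE.le (sqrt_nonneg _)
            (le_add_of_nonneg_right (by positivity)) (by positivity)
            ((div_le_one (by linarith)).2 hlog) (sqrt_one_add_sq_le_mul Λ ‖p‖ hΛ₀.ne')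
      _ = _ := by ring
  · rw [mul_assoc]
    gcongr
    exact sqrt_one_add_sq_rpow_inv_log_le hΛ
end
end

section
/- Let ρ ∈ L¹(ℝ³) be nonnegative and radial, i.e. ρ(x) = ρ(y) whenever |x| = |y|. Then for every x ∈ ℝ³ with x ≠ 0: ∫_{ℝ³} ρ(y)/|x−y| dy ≤ ( ∫_{ℝ³} ρ ) / |x|. -/
/-!
Integrating in polar coordinates turns the potential of a radial density `ρ(y) = F(|y|)` into
`∫ F(r) Θ(r) r² dr`, where `Θ(r) = ∫_{|ω| = 1} dω / |x - rω|`.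
Newton's theorem `Θ(r) = 4π / max(|x|, r)` is obtained without parametrising the sphere: the
densities `Θ` and `r ↦ 4π / max(|x|, r)` give every interval `(0, τ)` the same mass with respect
to `r² dr`, namely the potential at `x` of the ball of radius `τ`, which is computed by slicing
the ball perpendicularly to `x`. Hence they agree almost everywhere, and the bound follows from
`4π / max(|x|, r) ≤ 4π / |x|` together with `∫ ρ = 4π ∫ F(r) r² dr`.
-/

open MeasureTheory

noncomputable section

open Set Metric Real ENNReal

lemma setLIntegral_Iio_volumeIoiPow (n : ℕ) {F : ℝ → ℝ≥0∞} (hF : Measurable F)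
    (τ : Ioi (0 : ℝ)) :
    ∫⁻ r in Iio τ, F r ∂Measure.volumeIoiPow n =
      ∫⁻ r in Ioo (0 : ℝ) τ, ENNReal.ofReal (r ^ n) * F r := by
  have hdens : Measurable fun r : Ioi (0 : ℝ) => ENNReal.ofReal ((r : ℝ) ^ n) :=
    (measurable_subtype_coe.pow_const _).ennreal_ofReal
  have hF' : Measurable fun r : Ioi (0 : ℝ) => F r := hF.comp measurable_subtype_coe
  rw [Measure.volumeIoiPow, restrict_withDensity measurableSet_Iio,
    lintegral_withDensity_eq_lintegral_mul _ hdens hF', ← image_subtype_val_Ioi_Iio]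
  exact setLIntegral_subtype measurableSet_Ioi _ fun r => ENNReal.ofReal (r ^ n) * F r

section Polar

variable {E : Type*} [NormedAddCommGroup E] [NormedSpace ℝ E]

lemma norm_smul_sphere (ω : sphere (0 : E) 1) (r : Ioi (0 : ℝ)) :
    ‖(r : ℝ) • (ω : E)‖ = r := by
  rw [norm_smul, norm_eq_of_mem_sphere ω, mul_one, Real.norm_of_nonneg r.2.out.le]

variable [MeasurableSpace E] [BorelSpace E] [FiniteDimensional ℝ E] (μ : Measure E)
  [μ.IsAddHaarMeasure]

def sphericalLIntegral (g : E → ℝ≥0∞) (r : ℝ) : ℝ≥0∞ :=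
  ∫⁻ ω : sphere (0 : E) 1, g (r • (ω : E)) ∂μ.toSphere

variable [Nontrivial E]

lemma lintegral_eq_lintegral_sphere_prod (q : E → ℝ≥0∞) :
    ∫⁻ y, q y ∂μ = ∫⁻ p : sphere (0 : E) 1 × Ioi (0 : ℝ), q ((p.2 : ℝ) • (p.1 : E))
      ∂(μ.toSphere.prod (Measure.volumeIoiPow (Module.finrank ℝ E - 1))) := by
  have h0 : MeasurableSet ({0}ᶜ : Set E) := (measurableSet_singleton 0).compl
  calc ∫⁻ y, q y ∂μ = ∫⁻ z : ({0}ᶜ : Set E), q z ∂(μ.comap (↑)) := by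
        rw [lintegral_subtype_comap h0, restrict_compl_singleton]
    _ = ∫⁻ z : ({0}ᶜ : Set E),
          q ((homeomorphUnitSphereProd E).symm (homeomorphUnitSphereProd E z)) ∂(μ.comap (↑)) := by
        simp only [Homeomorph.symm_apply_apply]
    _ = _ := μ.measurePreserving_homeomorphUnitSphereProd.lintegral_comp_emb
        (Homeomorph.measurableEmbedding _) (fun p => q ((p.2 : ℝ) • (p.1 : E)))

lemma AEMeasurable.comp_smul_sphere {q : E → ℝ≥0∞} (hq : AEMeasurable q μ) :
    AEMeasurable (fun p : sphere (0 : E) 1 × Ioi (0 : ℝ) => q ((p.2 : ℝ) • (p.1 : E)))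
      (μ.toSphere.prod (Measure.volumeIoiPow (Module.finrank ℝ E - 1))) := by
  have hcomap : AEMeasurable (fun z : ({0}ᶜ : Set E) => q z) (μ.comap (↑)) := by
    refine AEMeasurable.comp_measurable ?_ measurable_subtype_coe
    rwa [map_comap_subtype_coe (measurableSet_singleton 0).compl, restrict_compl_singleton]
  exact hcomap.comp_quasiMeasurePreserving (μ.measurePreserving_homeomorphUnitSphereProd.symm
    (homeomorphUnitSphereProd E).toMeasurableEquiv).quasiMeasurePreserving

lemma lintegral_radial_mul {F : ℝ → ℝ≥0∞} (hF : AEMeasurable (fun y => F ‖y‖) μ)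
    {g : E → ℝ≥0∞} (hg : Measurable g) :
    ∫⁻ y, F ‖y‖ * g y ∂μ = ∫⁻ r : Ioi (0 : ℝ), F r * sphericalLIntegral μ g r
      ∂Measure.volumeIoiPow (Module.finrank ℝ E - 1) := by
  have hFg : AEMeasurable (fun y => F ‖y‖ * g y) μ := hF.mul hg.aemeasurable
  rw [lintegral_eq_lintegral_sphere_prod, lintegral_prod_symm _ (hFg.comp_smul_sphere μ)]
  refine lintegral_congr fun r => ?_
  simp only [norm_smul_sphere, sphericalLIntegral]
  exact lintegral_const_mul _ (hg.comp (measurable_subtype_coe.const_smul _))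

lemma lintegral_radial {F : ℝ → ℝ≥0∞} (hF : AEMeasurable (fun y => F ‖y‖) μ) :
    ∫⁻ y, F ‖y‖ ∂μ = μ.toSphere univ *
      ∫⁻ r : Ioi (0 : ℝ), F r ∂Measure.volumeIoiPow (Module.finrank ℝ E - 1) := by
  have h := lintegral_radial_mul μ hF (measurable_const (a := (1 : ℝ≥0∞)))
  simp only [mul_one, sphericalLIntegral, lintegral_const, one_mul] at h
  rw [h, lintegral_mul_const' _ _ (measure_ne_top _ _), mul_comm]

lemma setLIntegral_Iio_sphericalLIntegral {g : E → ℝ≥0∞} (hg : Measurable g)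
    (τ : Ioi (0 : ℝ)) :
    ∫⁻ r in Iio τ, sphericalLIntegral μ g r ∂Measure.volumeIoiPow (Module.finrank ℝ E - 1) =
      ∫⁻ y in ball 0 τ, g y ∂μ := by
  have hF : Measurable fun y : E => (Iio (τ : ℝ)).indicator (1 : ℝ → ℝ≥0∞) ‖y‖ :=
    (measurable_one.indicator measurableSet_Iio).comp measurable_norm
  rw [← lintegral_indicator measurableSet_ball, ← lintegral_indicator measurableSet_Iio]
  convert (lintegral_radial_mul μ hF.aemeasurable hg).symm using 2 with r y
  · simp [indicator_apply, Subtype.coe_lt_coe]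
  · ext y
    simp only [indicator, mem_ball_zero_iff, mem_Iio]
    split_ifs <;> simp

lemma setLIntegral_ball_radial {F : ℝ → ℝ≥0∞} (hF : Measurable F) (τ : Ioi (0 : ℝ)) :
    ∫⁻ y in ball 0 τ, F ‖y‖ ∂μ = μ.toSphere univ *
      ∫⁻ r in Ioo (0 : ℝ) τ, ENNReal.ofReal (r ^ (Module.finrank ℝ E - 1)) * F r := by
  have hsph : ∀ r : Ioi (0 : ℝ),
      sphericalLIntegral μ (fun y => F ‖y‖) r = μ.toSphere univ * F r :=
    fun r => by simp [sphericalLIntegral, norm_smul_sphere, mul_comm]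
  rw [← setLIntegral_Iio_sphericalLIntegral μ (g := fun y => F ‖y‖) (hF.comp measurable_norm),
    lintegral_congr hsph,
    lintegral_const_mul _ (f := fun r : Ioi (0 : ℝ) => F r) (hF.comp measurable_subtype_coe),
    setLIntegral_Iio_volumeIoiPow _ hF]

end Polar

section Calculus

/-- The Newtonian potential of the ball of radius `t` at a point at distance `a` from its
centre. -/
def newtonBallPotential (a t : ℝ) : ℝ :=
  if t ≤ a then 4 * π * t ^ 3 / (3 * a) else 2 * π * t ^ 2 - 2 * π * a ^ 2 / 3

lemma integral_mul_inv_sqrt_sq_add {b : ℝ} (hb : b ≠ 0) (s : ℝ) :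
    ∫ r in (0 : ℝ)..s, r * (√(b ^ 2 + r ^ 2))⁻¹ = √(b ^ 2 + s ^ 2) - |b| := by
  have hpos : ∀ r : ℝ, 0 < b ^ 2 + r ^ 2 := fun r => by positivity
  have hderiv : ∀ r : ℝ,
      HasDerivAt (fun r => √(b ^ 2 + r ^ 2)) (r * (√(b ^ 2 + r ^ 2))⁻¹) r := by
    intro r
    convert ((hasDerivAt_pow 2 r).const_add (b ^ 2)).sqrt (hpos r).ne' using 1
    field_simp
    ring
  rw [intervalIntegral.integral_eq_sub_of_hasDerivAt (fun r _ => hderiv r)]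
  · simp [Real.sqrt_sq_eq_abs]
  · exact Continuous.intervalIntegrable (continuous_id.mul
      ((by fun_prop : Continuous fun r : ℝ => √(b ^ 2 + r ^ 2)).inv₀
        fun r => (Real.sqrt_pos.2 (hpos r)).ne')) _ _

lemma integral_sqrt_sub_mul {a t : ℝ} (ha : 0 < a) (ht : 0 < t) :
    ∫ h in -t..t, √(a ^ 2 + t ^ 2 - 2 * a * h) = ((a + t) ^ 3 - |a - t| ^ 3) / (3 * a) := by
  have hderiv : ∀ h ∈ Ioo (-t) t, HasDerivAt
      (fun h => -(a ^ 2 + t ^ 2 - 2 * a * h) * √(a ^ 2 + t ^ 2 - 2 * a * h) / (3 * a))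
      √(a ^ 2 + t ^ 2 - 2 * a * h) h := by
    intro h hh
    have hpos : 0 < a ^ 2 + t ^ 2 - 2 * a * h := by nlinarith [sq_nonneg (a - t), hh.2]
    have hlin : HasDerivAt (fun h => a ^ 2 + t ^ 2 - 2 * a * h) (-(2 * a)) h := by
      simpa using ((hasDerivAt_id h).const_mul (2 * a)).const_sub (a ^ 2 + t ^ 2)
    refine ((hlin.neg.mul (hlin.sqrt hpos.ne')).div_const (3 * a)).congr_deriv ?_
    have hsq := Real.mul_self_sqrt hpos.le
    have hs : √(a ^ 2 + t ^ 2 - 2 * a * h) ≠ 0 := (Real.sqrt_pos.2 hpos).ne'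
    simp only [Pi.neg_apply]
    field_simp
    linear_combination -hsq
  have hcont : Continuous fun h => √(a ^ 2 + t ^ 2 - 2 * a * h) := by fun_prop
  rw [intervalIntegral.integral_eq_sub_of_hasDerivAt_of_le (by linarith) (by fun_prop) hderiv
    (hcont.intervalIntegrable _ _)]
  have e1 : a ^ 2 + t ^ 2 - 2 * a * t = (a - t) ^ 2 := by ring
  have e2 : a ^ 2 + t ^ 2 - 2 * a * -t = (a + t) ^ 2 := by ring
  simp only [e1, e2, Real.sqrt_sq_eq_abs, abs_of_pos (by linarith : 0 < a + t), ← sq_abs (a - t),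
    abs_abs]
  field_simp
  ring

lemma integral_abs_sub {a t : ℝ} (ha : 0 < a) (ht : 0 < t) :
    ∫ h in -t..t, |a - h| = if t ≤ a then 2 * t * a else a ^ 2 + t ^ 2 := by
  have hleft : ∀ p ≤ a, ∫ h in p..a, |a - h| = (a - p) ^ 2 / 2 := fun p hp => by
    rw [intervalIntegral.integral_congr fun h hh => abs_of_nonneg
      (by rw [uIcc_of_le hp] at hh; linarith [hh.2]) (a := a - h),
      intervalIntegral.integral_sub intervalIntegrable_const intervalIntegral.intervalIntegrable_id]
    simp
    ring
  have hright : ∀ q ≥ a, ∫ h in a..q, |a - h| = (q - a) ^ 2 / 2 := fun q hq => by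
    rw [intervalIntegral.integral_congr fun h hh => abs_of_nonpos
      (by rw [uIcc_of_le hq] at hh; linarith [hh.1]) (a := a - h), intervalIntegral.integral_neg,
      intervalIntegral.integral_sub intervalIntegrable_const intervalIntegral.intervalIntegrable_id]
    simp
    ring
  have hii : ∀ p q : ℝ, IntervalIntegrable (fun h => |a - h|) volume p q :=
    fun p q => (by fun_prop : Continuous fun h : ℝ => |a - h|).intervalIntegrable p q
  rw [← intervalIntegral.integral_add_adjacent_intervals (hii (-t) a) (hii a t),
    hleft _ (by linarith)]
  split_ifs with hta
  · rw [intervalIntegral.integral_symm, hleft t hta]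
    ring
  · rw [hright t (by linarith)]
    ring

lemma integral_slice_potential {a t : ℝ} (ha : 0 < a) (ht : 0 < t) :
    ∫ h in -t..t, 2 * π * (√((a - h) ^ 2 + (t ^ 2 - h ^ 2)) - |a - h|) =
      newtonBallPotential a t := by
  have hsq : ∀ h : ℝ, (a - h) ^ 2 + (t ^ 2 - h ^ 2) = a ^ 2 + t ^ 2 - 2 * a * h :=
    fun h => by ring
  simp only [hsq]
  rw [intervalIntegral.integral_const_mul, intervalIntegral.integral_sub
    ((by fun_prop : Continuous fun h => √(a ^ 2 + t ^ 2 - 2 * a * h)).intervalIntegrable _ _)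
    ((by fun_prop : Continuous fun h : ℝ => |a - h|).intervalIntegrable _ _),
    integral_sqrt_sub_mul ha ht, integral_abs_sub ha ht, newtonBallPotential]
  split_ifs with hta
  · rw [abs_of_nonneg (by linarith : 0 ≤ a - t)]
    field_simp
    ring
  · rw [abs_of_neg (by linarith : a - t < 0)]
    field_simp
    ring

lemma integral_sq_mul_div_max {a t : ℝ} (ha : 0 < a) (ht : 0 < t) :
    ∫ r in (0 : ℝ)..t, r ^ 2 * (4 * π / max a r) = newtonBallPotential a t := by
  have hinner : ∀ q ∈ Icc 0 a,
      ∫ r in (0 : ℝ)..q, r ^ 2 * (4 * π / max a r) = 4 * π * q ^ 3 / (3 * a) := fun q hq => by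
    rw [intervalIntegral.integral_congr (g := fun r => 4 * π / a * r ^ 2) fun r hr => by
      rw [uIcc_of_le hq.1] at hr
      simp only [max_eq_left (hr.2.trans hq.2), mul_comm]]
    simp only [intervalIntegral.integral_const_mul, integral_pow]
    field_simp
    ring
  have houter : ∀ q ≥ a,
      ∫ r in a..q, r ^ 2 * (4 * π / max a r) = 2 * π * (q ^ 2 - a ^ 2) := fun q hq => by
    rw [intervalIntegral.integral_congr (g := fun r => 4 * π * r) fun r hr => by
      rw [uIcc_of_le hq] at hr
      have hr0 : 0 < r := ha.trans_le hr.1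
      simp only [max_eq_right hr.1]
      field_simp]
    rw [intervalIntegral.integral_const_mul, integral_id]
    ring
  have hii : ∀ p q : ℝ, IntervalIntegrable (fun r => r ^ 2 * (4 * π / max a r)) volume p q :=
    fun p q => Continuous.intervalIntegrable ((continuous_pow 2).mul
      (continuous_const.div (by fun_prop) fun r => (lt_max_of_lt_left ha).ne')) p q
  rw [newtonBallPotential]
  split_ifs with hta
  · exact hinner t ⟨ht.le, hta⟩
  · rw [← intervalIntegral.integral_add_adjacent_intervals (hii 0 a) (hii a t),
      hinner a ⟨ha.le, le_rfl⟩, houter t (by linarith)]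
    field_simp
    ring

lemma setLIntegral_Iio_four_pi_div_max {a : ℝ} (ha : 0 < a) (τ : Ioi (0 : ℝ)) :
    ∫⁻ r in Iio τ, ENNReal.ofReal (4 * π / max a r) ∂Measure.volumeIoiPow 2 =
      ENNReal.ofReal (newtonBallPotential a τ) := by
  have hcont : Continuous fun r => r ^ 2 * (4 * π / max a r) :=
    (continuous_pow 2).mul (continuous_const.div (by fun_prop) fun r => (lt_max_of_lt_left ha).ne')
  rw [setLIntegral_Iio_volumeIoiPow 2 (F := fun r => ENNReal.ofReal (4 * π / max a r))
      (by fun_prop) τ,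
    setLIntegral_congr_fun measurableSet_Ioo fun r _ => (ENNReal.ofReal_mul (sq_nonneg r)).symm,
    ← ofReal_integral_eq_lintegral_ofReal (hcont.integrableOn_Icc.mono_set Ioo_subset_Icc_self),
    ← integral_Ioc_eq_integral_Ioo, ← intervalIntegral.integral_of_le τ.2.out.le,
    integral_sq_mul_div_max ha τ.2]
  exact ae_of_all _ fun r => mul_nonneg (sq_nonneg r)
    (div_nonneg (by positivity) (ha.le.trans (le_max_left a r)))

end Calculus

section Disc

variable {E : Type*} [NormedAddCommGroup E] [InnerProductSpace ℝ E] [FiniteDimensional ℝ E]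
  [MeasurableSpace E] [BorelSpace E]

lemma toSphere_univ_of_finrank_eq_two (hE : Module.finrank ℝ E = 2) :
    (volume : Measure E).toSphere univ = ENNReal.ofReal (2 * π) := by
  have : Nontrivial E := Module.nontrivial_of_finrank_eq_succ hE
  rw [Measure.toSphere_apply_univ, InnerProductSpace.volume_ball_of_dim_even (k := 1) (by simpa),
    hE]
  simp [ENNReal.ofReal_mul]

lemma toSphere_univ_of_finrank_eq_three (hE : Module.finrank ℝ E = 3) :
    (volume : Measure E).toSphere univ = ENNReal.ofReal (4 * π) := by
  have : Nontrivial E := Module.nontrivial_of_finrank_eq_succ hE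
  rw [Measure.toSphere_apply_univ, InnerProductSpace.volume_ball_of_dim_odd (k := 1) (by simpa),
    hE]
  norm_num
  rw [← ENNReal.ofReal_ofNat 3, ← ENNReal.ofReal_ofNat 4, ← ENNReal.ofReal_mul (by norm_num),
    ← ENNReal.ofReal_mul (by norm_num)]
  ring_nf

lemma setLIntegral_ball_inv_sqrt_sq_add_norm_sq (hE : Module.finrank ℝ E = 2) {b s : ℝ}
    (hb : b ≠ 0) (hs : 0 < s) :
    ∫⁻ w in ball (0 : E) s, ENNReal.ofReal (√(b ^ 2 + ‖w‖ ^ 2))⁻¹ =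
      ENNReal.ofReal (2 * π * (√(b ^ 2 + s ^ 2) - |b|)) := by
  have : Nontrivial E := Module.nontrivial_of_finrank_eq_succ hE
  have hcont : Continuous fun r : ℝ => r * (√(b ^ 2 + r ^ 2))⁻¹ :=
    continuous_id.mul ((by fun_prop : Continuous fun r : ℝ => √(b ^ 2 + r ^ 2)).inv₀
      fun r => (Real.sqrt_pos.2 (by positivity)).ne')
  rw [setLIntegral_ball_radial volume (F := fun r => ENNReal.ofReal (√(b ^ 2 + r ^ 2))⁻¹)
    (by fun_prop) ⟨s, hs⟩, toSphere_univ_of_finrank_eq_two hE, hE,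
    setLIntegral_congr_fun measurableSet_Ioo fun r hr => by
      rw [pow_one, ← ENNReal.ofReal_mul hr.1.le],
    ← ofReal_integral_eq_lintegral_ofReal (hcont.integrableOn_Icc.mono_set Ioo_subset_Icc_self),
    ← integral_Ioc_eq_integral_Ioo, ← intervalIntegral.integral_of_le hs.le,
    integral_mul_inv_sqrt_sq_add hb, ← ENNReal.ofReal_mul (by positivity), mul_assoc]
  filter_upwards [ae_restrict_mem measurableSet_Ioo] with r hr
  exact mul_nonneg hr.1.le (by positivity)

end Disc

section Slicing

variable {V : Type*} [NormedAddCommGroup V] [InnerProductSpace ℝ V] [FiniteDimensional ℝ V]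
  [MeasurableSpace V] [BorelSpace V]

lemma lintegral_slice_ball_inv_norm_sub (hV : Module.finrank ℝ V = 2) {a t h : ℝ} (ht : 0 < t)
    (hh : h ≠ a) :
    ∫⁻ w : V, (ball (0 : WithLp 2 (ℝ × V)) t).indicator
        (fun z => ENNReal.ofReal ‖WithLp.toLp 2 (a, 0) - z‖⁻¹) (WithLp.toLp 2 (h, w)) =
      ENNReal.ofReal ((Ioo (-t) t).indicator
        (fun h => 2 * π * (√((a - h) ^ 2 + (t ^ 2 - h ^ 2)) - |a - h|)) h) := by
  have hslice : ∀ w : V, (ball (0 : WithLp 2 (ℝ × V)) t).indicator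
        (fun z => ENNReal.ofReal ‖WithLp.toLp 2 (a, 0) - z‖⁻¹) (WithLp.toLp 2 (h, w)) =
      (ball (0 : V) √(t ^ 2 - h ^ 2)).indicator
        (fun w => ENNReal.ofReal (√((a - h) ^ 2 + ‖w‖ ^ 2))⁻¹) w := fun w => by
    have hmem : WithLp.toLp 2 (h, w) ∈ ball (0 : WithLp 2 (ℝ × V)) t ↔
        w ∈ ball (0 : V) √(t ^ 2 - h ^ 2) := by
      rw [mem_ball_zero_iff, mem_ball_zero_iff, WithLp.prod_norm_eq_of_L2, Real.sqrt_lt' ht,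
        Real.lt_sqrt (norm_nonneg w)]
      simp only [WithLp.toLp_fst, WithLp.toLp_snd, Real.norm_eq_abs, sq_abs]
      exact lt_sub_iff_add_lt'.symm
    by_cases hw : w ∈ ball (0 : V) √(t ^ 2 - h ^ 2)
    · rw [indicator_of_mem (hmem.2 hw), indicator_of_mem hw, ← WithLp.toLp_sub,
        WithLp.prod_norm_eq_of_L2]
      simp [Real.norm_eq_abs, sq_abs]
    · rw [indicator_of_notMem (mt hmem.1 hw), indicator_of_notMem hw]
  rw [lintegral_congr hslice, lintegral_indicator measurableSet_ball]
  by_cases hht : h ∈ Ioo (-t) t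
  · have hs : 0 < t ^ 2 - h ^ 2 := by nlinarith [hht.1, hht.2]
    rw [setLIntegral_ball_inv_sqrt_sq_add_norm_sq hV (sub_ne_zero.2 hh.symm) (Real.sqrt_pos.2 hs),
      Real.sq_sqrt hs.le, indicator_of_mem hht]
  · have hs : √(t ^ 2 - h ^ 2) = 0 := by
      refine Real.sqrt_eq_zero_of_nonpos ?_
      simp only [mem_Ioo, not_and_or, not_lt] at hht
      rcases hht with hht | hht <;> nlinarith
    simp [hs, indicator_of_notMem hht]

lemma setLIntegral_ball_inv_norm_toLp_sub (hV : Module.finrank ℝ V = 2) {a t : ℝ} (ha : 0 < a)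
    (ht : 0 < t) :
    ∫⁻ z in ball (0 : WithLp 2 (ℝ × V)) t, ENNReal.ofReal ‖WithLp.toLp 2 (a, 0) - z‖⁻¹ =
      ENNReal.ofReal (newtonBallPotential a t) := by
  set k := (ball (0 : WithLp 2 (ℝ × V)) t).indicator
    (fun z => ENNReal.ofReal ‖WithLp.toLp 2 (a, 0) - z‖⁻¹)
  set g := (Ioo (-t) t).indicator (fun h => 2 * π * (√((a - h) ^ 2 + (t ^ 2 - h ^ 2)) - |a - h|))
  have hk : Measurable k := Measurable.indicator (by fun_prop) measurableSet_ball
  have hcont : Continuous fun h => 2 * π * (√((a - h) ^ 2 + (t ^ 2 - h ^ 2)) - |a - h|) := by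
    fun_prop
  have hg_int : Integrable g := (integrable_indicator_iff measurableSet_Ioo).2
    (hcont.integrableOn_Icc.mono_set Ioo_subset_Icc_self)
  have hg_nonneg : ∀ h, 0 ≤ g h := indicator_nonneg fun h hh => by
    have habs : |a - h| ≤ √((a - h) ^ 2 + (t ^ 2 - h ^ 2)) := by
      rw [← Real.sqrt_sq_eq_abs]
      exact Real.sqrt_le_sqrt (by nlinarith [hh.1, hh.2])
    exact mul_nonneg (by positivity) (sub_nonneg.2 habs)
  have hae : ∀ᵐ h : ℝ, h ≠ a := by
    filter_upwards [(countable_singleton a).ae_notMem volume] with h hh using hh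
  rw [← lintegral_indicator measurableSet_ball,
    ← (WithLp.volume_preserving_toLp ℝ V).lintegral_comp hk, Measure.volume_eq_prod,
    lintegral_prod (fun p : ℝ × V => k (WithLp.toLp 2 p))
      (hk.comp (WithLp.measurable_toLp 2 _)).aemeasurable,
    lintegral_congr_ae (hae.mono fun h hh => lintegral_slice_ball_inv_norm_sub hV ht hh),
    ← ofReal_integral_eq_lintegral_ofReal hg_int (ae_of_all _ hg_nonneg),
    integral_indicator measurableSet_Ioo, ← integral_Ioc_eq_integral_Ioo,
    ← intervalIntegral.integral_of_le (by linarith), integral_slice_potential ha ht]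

end Slicing

lemma exists_linearIsometryEquiv_apply_eq {E F : Type*} [NormedAddCommGroup E]
    [InnerProductSpace ℝ E] [FiniteDimensional ℝ E] [NormedAddCommGroup F] [InnerProductSpace ℝ F]
    [FiniteDimensional ℝ F] (hEF : Module.finrank ℝ E = Module.finrank ℝ F) {x : E} {y : F}
    (hxy : ‖x‖ = ‖y‖) : ∃ e : E ≃ₗᵢ[ℝ] F, e x = y := by
  let e₀ := (stdOrthonormalBasis ℝ E).equiv (stdOrthonormalBasis ℝ F) (finCongr hEF)
  exact ⟨e₀.trans (Submodule.reflection (ℝ ∙ (e₀ x - y))ᗮ),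
    Submodule.reflection_sub ((e₀.norm_map x).trans hxy)⟩

section Newton

variable {E : Type*} [NormedAddCommGroup E] [InnerProductSpace ℝ E] [FiniteDimensional ℝ E]
  [MeasurableSpace E] [BorelSpace E]

lemma setLIntegral_ball_inv_norm_sub (hE : Module.finrank ℝ E = 3) {x : E} (hx : x ≠ 0) {t : ℝ}
    (ht : 0 < t) :
    ∫⁻ y in ball 0 t, ENNReal.ofReal ‖x - y‖⁻¹ = ENNReal.ofReal (newtonBallPotential ‖x‖ t) := by
  let P := WithLp 2 (ℝ × EuclideanSpace ℝ (Fin 2))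
  have hP : Module.finrank ℝ P = 3 := by
    rw [(WithLp.linearEquiv 2 ℝ (ℝ × EuclideanSpace ℝ (Fin 2))).finrank_eq]
    simp
  have hnorm : ‖x‖ = ‖(WithLp.toLp 2 (‖x‖, 0) : P)‖ := by simp
  obtain ⟨e, he⟩ := exists_linearIsometryEquiv_apply_eq (hE.trans hP.symm) hnorm
  have hball : e ⁻¹' ball 0 t = ball 0 t := by simp
  rw [← setLIntegral_ball_inv_norm_toLp_sub finrank_euclideanSpace_fin (norm_pos_iff.2 hx) ht,
    ← e.measurePreserving.setLIntegral_comp_preimage_emb e.toHomeomorph.measurableEmbedding, hball]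
  simp_rw [← he, ← map_sub, e.norm_map]

lemma setLIntegral_Iio_sphericalLIntegral_inv_norm_sub (hE : Module.finrank ℝ E = 3) {x : E}
    (hx : x ≠ 0) (τ : Ioi (0 : ℝ)) :
    ∫⁻ r in Iio τ, sphericalLIntegral volume (fun y => ENNReal.ofReal ‖x - y‖⁻¹) r
      ∂Measure.volumeIoiPow 2 = ENNReal.ofReal (newtonBallPotential ‖x‖ τ) := by
  have : Nontrivial E := Module.nontrivial_of_finrank_eq_succ hE
  have h := setLIntegral_Iio_sphericalLIntegral volume
    (g := fun y => ENNReal.ofReal ‖x - y‖⁻¹) (by fun_prop) τ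
  rw [hE] at h
  rw [h, setLIntegral_ball_inv_norm_sub hE hx τ.2]

lemma ae_sphericalLIntegral_inv_norm_sub_eq (hE : Module.finrank ℝ E = 3) {x : E} (hx : x ≠ 0) :
    ∀ᵐ r : Ioi (0 : ℝ) ∂Measure.volumeIoiPow 2,
      sphericalLIntegral volume (fun y => ENNReal.ofReal ‖x - y‖⁻¹) r =
        ENNReal.ofReal (4 * π / max ‖x‖ r) := by
  have hΘ : Measurable fun r : Ioi (0 : ℝ) =>
      sphericalLIntegral volume (fun y => ENNReal.ofReal ‖x - y‖⁻¹) r :=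
    Measurable.lintegral_prod_left (by fun_prop)
  have hW : Measurable fun r : Ioi (0 : ℝ) => ENNReal.ofReal (4 * π / max ‖x‖ r) := by fun_prop
  refine (withDensity_eq_iff_of_sigmaFinite hΘ.aemeasurable hW.aemeasurable).1 ?_
  let S := Measure.finiteSpanningSetsIn_volumeIoiPow_range_Iio 2
  refine Measure.ext_of_generateFrom_of_iUnion _ S.set
    (BorelSpace.measurable_eq.trans (borel_eq_generateFrom_Iio _)) isPiSystem_Iio S.spanning
    S.set_mem (fun i => ?_) ?_
  · obtain ⟨τ, hτ⟩ := S.set_mem i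
    rw [← hτ, withDensity_apply _ measurableSet_Iio,
      setLIntegral_Iio_sphericalLIntegral_inv_norm_sub hE hx]
    exact ofReal_ne_top
  · rintro _ ⟨τ, rfl⟩
    rw [withDensity_apply _ measurableSet_Iio, withDensity_apply _ measurableSet_Iio,
      setLIntegral_Iio_sphericalLIntegral_inv_norm_sub hE hx,
      setLIntegral_Iio_four_pi_div_max (norm_pos_iff.2 hx)]

lemma lintegral_radial_mul_inv_norm_sub_le (hE : Module.finrank ℝ E = 3) {F : ℝ → ℝ≥0∞}
    (hF : AEMeasurable (fun y : E => F ‖y‖)) {x : E} (hx : x ≠ 0) :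
    ∫⁻ y, F ‖y‖ * ENNReal.ofReal ‖x - y‖⁻¹ ≤ ENNReal.ofReal ‖x‖⁻¹ * ∫⁻ y : E, F ‖y‖ := by
  have : Nontrivial E := Module.nontrivial_of_finrank_eq_succ hE
  have hpolar := lintegral_radial_mul volume hF
    (g := fun y => ENNReal.ofReal ‖x - y‖⁻¹) (by fun_prop)
  have hsize := lintegral_radial volume hF
  rw [hE] at hpolar hsize
  have hbound : ∀ r : ℝ, ENNReal.ofReal (4 * π / max ‖x‖ r) ≤
      ENNReal.ofReal ‖x‖⁻¹ * ENNReal.ofReal (4 * π) := fun r => by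
    rw [← ENNReal.ofReal_mul (by positivity), inv_mul_eq_div]
    exact ENNReal.ofReal_le_ofReal
      (div_le_div_of_nonneg_left (by positivity) (norm_pos_iff.2 hx) (le_max_left _ _))
  calc ∫⁻ y, F ‖y‖ * ENNReal.ofReal ‖x - y‖⁻¹
      = ∫⁻ r : Ioi (0 : ℝ), F r * ENNReal.ofReal (4 * π / max ‖x‖ r)
          ∂Measure.volumeIoiPow 2 := by
        rw [hpolar]
        exact lintegral_congr_ae ((ae_sphericalLIntegral_inv_norm_sub_eq hE hx).mono
          fun r hr => by simp only [hr])
    _ ≤ ∫⁻ r : Ioi (0 : ℝ), ENNReal.ofReal ‖x‖⁻¹ * (ENNReal.ofReal (4 * π) * F r)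
          ∂Measure.volumeIoiPow 2 :=
        lintegral_mono fun r => by
          rw [← mul_assoc, mul_comm (F r)]
          exact mul_le_mul_left (hbound r) _
    _ = ENNReal.ofReal ‖x‖⁻¹ * ∫⁻ y : E, F ‖y‖ := by
        rw [lintegral_const_mul' _ _ ofReal_ne_top, lintegral_const_mul' _ _ ofReal_ne_top, hsize,
          toSphere_univ_of_finrank_eq_three hE]

end Newton

/-- Newton's theorem bound: for a nonnegative radial `ρ ∈ L¹(ℝ³)` and any `x ≠ 0`,
`∫ ρ(y)/|x−y| dy ≤ (∫ ρ)/|x|`. -/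
theorem newton_radial_potential_bound
    (ρ : R3 → ℝ) (hint : Integrable ρ) (hpos : ∀ x, 0 ≤ ρ x)
    (hrad : ∀ x y : R3, ‖x‖ = ‖y‖ → ρ x = ρ y)
    (x : R3) (hx : x ≠ 0) :
    ∫⁻ y, ENNReal.ofReal (ρ y / ‖x - y‖) ≤ ENNReal.ofReal ((∫ y, ρ y) / ‖x‖) := by
  let F : ℝ → ℝ≥0∞ := fun r => ENNReal.ofReal (ρ (r • EuclideanSpace.single 0 1))
  have hρF : ∀ y, ENNReal.ofReal (ρ y) = F ‖y‖ := fun y => by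
    simp only [F, hrad y (‖y‖ • EuclideanSpace.single 0 1) (by simp [norm_smul])]
  have hF : AEMeasurable fun y : R3 => F ‖y‖ := by
    simpa only [hρF] using hint.aestronglyMeasurable.aemeasurable.ennreal_ofReal
  calc ∫⁻ y, ENNReal.ofReal (ρ y / ‖x - y‖)
      = ∫⁻ y, F ‖y‖ * ENNReal.ofReal ‖x - y‖⁻¹ := lintegral_congr fun y => by
        rw [div_eq_mul_inv, ENNReal.ofReal_mul (hpos y), hρF]
    _ ≤ ENNReal.ofReal ‖x‖⁻¹ * ∫⁻ y : R3, F ‖y‖ :=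
        lintegral_radial_mul_inv_norm_sub_le finrank_euclideanSpace_fin hF hx
    _ = ENNReal.ofReal ((∫ y, ρ y) / ‖x‖) := by
        rw [div_eq_inv_mul, ENNReal.ofReal_mul (inv_nonneg.2 (norm_nonneg x)),
          ofReal_integral_eq_lintegral_ofReal hint (ae_of_all _ hpos)]
        simp only [hρF]
end
end

section
/- Let C, a > 0 and let φ : ℝ³ → ℂ be measurable with |φ(x)| ≤ C e^{−a|x|} for all x ∈ ℝ³. Then there exists a constant K > 0, depending only on C and a, such that for every z ∈ ℝ³ with |z| ≥ 1: ∬_{ℝ³×ℝ³} |φ(x)|² |φ(y−z)|² / |x−y|² dx dy ≤ K / |z|². -/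
/-!
Write `e(x) = exp (-a ‖x‖)`, so that the integrand is at most `C⁴ (e(x) e(y - z))² / ‖x - y‖²`.
Since `‖z‖ ≤ ‖x‖ + ‖y - z‖ + ‖x - y‖`, either `‖x - y‖ ≥ ‖z‖ / 2`, and then
`1 / ‖x - y‖² ≤ 4 / ‖z‖²`, or `‖x‖ + ‖y - z‖ ≥ ‖z‖ / 2`, and then one factor
`e(x) e(y - z) ≤ exp (-a ‖z‖ / 2) ≤ 8 / (a ‖z‖)²`. Either way `‖z‖²` times the integrand is
bounded by fixed multiples of `e(x) e(y - z)` and `e(x) e(y - z) / ‖x - y‖²`. Their integrals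
do not depend on `z` and are finite: `e` is integrable, and `1 / ‖u‖²` is integrable on the unit
ball in dimension `3` and at most `1` outside it.
-/

open MeasureTheory Real

noncomputable section

open Metric Set

lemma exp_neg_sq_div_sq_le {a t r ρ : ℝ} (ha : 0 < a) (ht : 0 ≤ t) (hρ : 0 < ρ)
    (h : ρ ≤ t + r) :
    exp (-a * t) ^ 2 / r ^ 2 ≤ (4 * exp (-a * t) + 8 / a ^ 2 * (exp (-a * t) / r ^ 2)) / ρ ^ 2 := by
  set e := exp (-a * t)
  have he0 : 0 < e := exp_pos _
  have he1 : e ≤ 1 := exp_le_one_iff.mpr (by nlinarith)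
  rw [le_div_iff₀ (by positivity)]
  rcases le_or_gt (ρ / 2) r with hr | hr
  · have hr0 : 0 < r := by linarith
    have hfar : e ^ 2 / r ^ 2 * ρ ^ 2 ≤ 4 * e := by
      have hρr : ρ ^ 2 ≤ 4 * r ^ 2 := by nlinarith
      have hee : e ^ 2 ≤ e := by nlinarith
      rw [div_mul_eq_mul_div, div_le_iff₀ (by positivity)]
      nlinarith [mul_le_mul hee hρr (by positivity) he0.le]
    have hnear_nonneg : 0 ≤ 8 / a ^ 2 * (e / r ^ 2) := by positivity
    linarith
  · -- `e ≤ exp (-a ρ / 2)`, and `s ^ 2 exp (-s) ≤ 2` for `s = a ρ / 2`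
    have hρe : ρ ^ 2 * e ≤ 8 / a ^ 2 := by
      have hs := pow_div_factorial_le_exp (x := a * ρ / 2) (by positivity) 2
      have he_le : e * exp (a * ρ / 2) ≤ 1 := by
        rw [← exp_add]; exact exp_le_one_iff.mpr (by nlinarith)
      rw [le_div_iff₀ (by positivity)]
      simp only [Nat.factorial_two, Nat.cast_ofNat] at hs
      nlinarith
    have hfar_nonneg : 0 ≤ 4 * e := by positivity
    calc e ^ 2 / r ^ 2 * ρ ^ 2 = ρ ^ 2 * e * (e / r ^ 2) := by ring
      _ ≤ 8 / a ^ 2 * (e / r ^ 2) := by gcongr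
      _ ≤ _ := by linarith

lemma ofReal_cross_term_le {E F : Type*} [NormedAddCommGroup E] [NormedAddCommGroup F]
    {C a : ℝ} (ha : 0 < a) {φ : E → F} (hdecay : ∀ x, ‖φ x‖ ≤ C * exp (-a * ‖x‖))
    {z : E} (hz : z ≠ 0) (x y : E) :
    ENNReal.ofReal (‖φ x‖ ^ 2 * ‖φ (y - z)‖ ^ 2 / ‖x - y‖ ^ 2)
      ≤ ENNReal.ofReal (C ^ 4 / ‖z‖ ^ 2) *
        (4 * (ENNReal.ofReal (exp (-a * ‖x‖)) * ENNReal.ofReal (exp (-a * ‖y - z‖)))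
          + ENNReal.ofReal (8 / a ^ 2) *
            (ENNReal.ofReal (exp (-a * ‖x‖)) * ENNReal.ofReal (exp (-a * ‖y - z‖)) *
              ENNReal.ofReal (‖x - y‖ ^ 2)⁻¹)) := by
  have hprod : ‖φ x‖ * ‖φ (y - z)‖ ≤ C ^ 2 * exp (-a * (‖x‖ + ‖y - z‖)) := by
    calc ‖φ x‖ * ‖φ (y - z)‖ ≤ (C * exp (-a * ‖x‖)) * (C * exp (-a * ‖y - z‖)) :=
          mul_le_mul (hdecay x) (hdecay _) (norm_nonneg _) ((norm_nonneg _).trans (hdecay x))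
      _ = C ^ 2 * exp (-a * (‖x‖ + ‖y - z‖)) := by rw [mul_add, exp_add]; ring
  have htri : ‖z‖ ≤ (‖x‖ + ‖y - z‖) + ‖x - y‖ := by
    calc ‖z‖ = ‖x - (x - y) - (y - z)‖ := by congr 1; abel
      _ ≤ ‖x‖ + ‖x - y‖ + ‖y - z‖ := norm_sub_le_of_le (norm_sub_le _ _) le_rfl
      _ = _ := by ring
  have hnear_far := exp_neg_sq_div_sq_le ha (by positivity) (norm_pos_iff.mpr hz) htri
  have hreal : ‖φ x‖ ^ 2 * ‖φ (y - z)‖ ^ 2 / ‖x - y‖ ^ 2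
      ≤ C ^ 4 / ‖z‖ ^ 2 * (4 * (exp (-a * ‖x‖) * exp (-a * ‖y - z‖))
          + 8 / a ^ 2 * (exp (-a * ‖x‖) * exp (-a * ‖y - z‖) * (‖x - y‖ ^ 2)⁻¹)) := by
    calc ‖φ x‖ ^ 2 * ‖φ (y - z)‖ ^ 2 / ‖x - y‖ ^ 2
        ≤ C ^ 4 * (exp (-a * (‖x‖ + ‖y - z‖)) ^ 2 / ‖x - y‖ ^ 2) := by
          rw [← mul_pow, mul_div_assoc', show C ^ 4 = (C ^ 2) ^ 2 by ring, ← mul_pow]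
          gcongr
      _ ≤ C ^ 4 * ((4 * exp (-a * (‖x‖ + ‖y - z‖))
            + 8 / a ^ 2 * (exp (-a * (‖x‖ + ‖y - z‖)) / ‖x - y‖ ^ 2)) / ‖z‖ ^ 2) := by
          gcongr
      _ = _ := by rw [mul_add, exp_add]; ring
  refine (ENNReal.ofReal_le_ofReal hreal).trans_eq ?_
  rw [ENNReal.ofReal_mul (by positivity), ENNReal.ofReal_add (by positivity) (by positivity),
    ENNReal.ofReal_mul (by positivity), ENNReal.ofReal_mul (by positivity),
    ENNReal.ofReal_mul (by positivity), ENNReal.ofReal_mul (by positivity),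
    ENNReal.ofReal_mul (by positivity), ENNReal.ofReal_ofNat]

section

variable {E : Type*} [NormedAddCommGroup E] [MeasurableSpace E] [BorelSpace E]
  {μ : Measure E} [μ.IsAddRightInvariant]

lemma lintegral_mul_inv_norm_sq_sub_le {g : E → ENNReal} (hg : g ≤ 1) (x : E) :
    ∫⁻ y, g y * ENNReal.ofReal (‖x - y‖ ^ 2)⁻¹ ∂μ
      ≤ ∫⁻ u in ball 0 1, ENNReal.ofReal (‖u‖ ^ 2)⁻¹ ∂μ + ∫⁻ y, g y ∂μ := by
  set k := (ball (0 : E) 1).indicator fun u => ENNReal.ofReal (‖u‖ ^ 2)⁻¹ with hk_def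
  have hk_meas : Measurable k := (by fun_prop : Measurable _).indicator measurableSet_ball
  have hk : ∀ y, g y * ENNReal.ofReal (‖x - y‖ ^ 2)⁻¹ ≤ k (y - x) + g y := by
    intro y
    rw [norm_sub_rev]
    by_cases hy : ‖y - x‖ < 1
    · rw [hk_def, indicator_of_mem (mem_ball_zero_iff.mpr hy)]
      exact le_add_right (mul_le_of_le_one_left' (hg y))
    · have hk1 : ENNReal.ofReal (‖y - x‖ ^ 2)⁻¹ ≤ 1 :=
        ENNReal.ofReal_le_one.mpr (inv_le_one_of_one_le₀ (one_le_pow₀ (not_lt.mp hy)))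
      exact le_add_left (mul_le_of_le_one_right' hk1)
  calc ∫⁻ y, g y * ENNReal.ofReal (‖x - y‖ ^ 2)⁻¹ ∂μ
      ≤ ∫⁻ y, k (y - x) + g y ∂μ := lintegral_mono hk
    _ = ∫⁻ u in ball 0 1, ENNReal.ofReal (‖u‖ ^ 2)⁻¹ ∂μ + ∫⁻ y, g y ∂μ := by
        rw [lintegral_add_left (f := fun y => k (y - x)) (hk_meas.comp (measurable_sub_const x)),
          lintegral_sub_right_eq_self, lintegral_indicator measurableSet_ball]

end

section HaarMeasure

variable {E : Type*} [NormedAddCommGroup E] [NormedSpace ℝ E] [FiniteDimensional ℝ E]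
  [MeasurableSpace E] [BorelSpace E] {μ : Measure E} [μ.IsAddHaarMeasure]

lemma integrable_exp_neg_mul_norm [Nontrivial E] {b : ℝ} (hb : 0 < b) :
    Integrable (fun x : E => exp (-b * ‖x‖)) μ := by
  rw [integrable_fun_norm_addHaar μ (f := fun t => exp (-b * t))]
  simpa [← Real.rpow_natCast] using
    integrableOn_rpow_mul_exp_neg_mul_rpow (p := 1) (s := (Module.finrank ℝ E - 1 : ℕ))
      (neg_one_lt_zero.trans_le (Nat.cast_nonneg _)) one_pos hb

lemma integrableOn_inv_norm_sq_ball (hd : 2 < Module.finrank ℝ E) :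
    IntegrableOn (fun u : E => (‖u‖ ^ 2)⁻¹) (ball 0 1) μ := by
  refine integrableOn_ball_of_norm_le_rpow (C := 1) (α := 2) (by omega) (by exact_mod_cast hd)
    (.of_forall fun u => ?_) (by fun_prop)
  rw [one_mul, Real.rpow_neg (norm_nonneg u), Real.norm_of_nonneg (by positivity)]
  norm_cast

lemma lintegral_prod_mul_inv_norm_sq_le {f g : E → ENNReal} (hf : Measurable f)
    (hg : Measurable g) (hg1 : g ≤ 1) :
    ∫⁻ w, f w.1 * g w.2 * ENNReal.ofReal (‖w.1 - w.2‖ ^ 2)⁻¹ ∂μ.prod μ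
      ≤ (∫⁻ x, f x ∂μ) * (∫⁻ u in ball 0 1, ENNReal.ofReal (‖u‖ ^ 2)⁻¹ ∂μ + ∫⁻ y, g y ∂μ) := by
  rw [lintegral_prod _ (by fun_prop), ← lintegral_mul_const _ hf]
  refine lintegral_mono fun x => ?_
  simp_rw [mul_assoc]
  rw [lintegral_const_mul _ (by fun_prop)]
  gcongr
  exact lintegral_mul_inv_norm_sq_sub_le hg1 x

lemma lintegral_cross_term_le {F : Type*} [NormedAddCommGroup F] {C a : ℝ} (ha : 0 < a)
    {φ : E → F} (hdecay : ∀ x, ‖φ x‖ ≤ C * exp (-a * ‖x‖)) {z : E} (hz : z ≠ 0) :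
    ∫⁻ w, ENNReal.ofReal (‖φ w.1‖ ^ 2 * ‖φ (w.2 - z)‖ ^ 2 / ‖w.1 - w.2‖ ^ 2) ∂μ.prod μ
      ≤ ENNReal.ofReal (C ^ 4 / ‖z‖ ^ 2) *
        (4 * (∫⁻ x, ENNReal.ofReal (exp (-a * ‖x‖)) ∂μ) ^ 2
          + ENNReal.ofReal (8 / a ^ 2) * ((∫⁻ x, ENNReal.ofReal (exp (-a * ‖x‖)) ∂μ) *
            (∫⁻ u in ball 0 1, ENNReal.ofReal (‖u‖ ^ 2)⁻¹ ∂μ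
              + ∫⁻ x, ENNReal.ofReal (exp (-a * ‖x‖)) ∂μ))) := by
  set ψ : E → ENNReal := fun v => ENNReal.ofReal (exp (-a * ‖v‖))
  have hψ_meas : Measurable ψ := by fun_prop
  have hψ_le : (fun y => ψ (y - z)) ≤ 1 := fun v =>
    ENNReal.ofReal_le_one.mpr (exp_le_one_iff.mpr (by nlinarith [norm_nonneg (v - z)]))
  calc _ ≤ ∫⁻ w, ENNReal.ofReal (C ^ 4 / ‖z‖ ^ 2) * (4 * (ψ w.1 * ψ (w.2 - z))
            + ENNReal.ofReal (8 / a ^ 2) *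
              (ψ w.1 * ψ (w.2 - z) * ENNReal.ofReal (‖w.1 - w.2‖ ^ 2)⁻¹)) ∂μ.prod μ :=
        lintegral_mono fun w => ofReal_cross_term_le ha hdecay hz w.1 w.2
    _ = ENNReal.ofReal (C ^ 4 / ‖z‖ ^ 2) * (4 * ∫⁻ w, ψ w.1 * ψ (w.2 - z) ∂μ.prod μ
          + ENNReal.ofReal (8 / a ^ 2) *
            ∫⁻ w, ψ w.1 * ψ (w.2 - z) * ENNReal.ofReal (‖w.1 - w.2‖ ^ 2)⁻¹ ∂μ.prod μ) := by
        rw [lintegral_const_mul _ (by fun_prop), lintegral_add_left (by fun_prop),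
          lintegral_const_mul _ (by fun_prop), lintegral_const_mul _ (by fun_prop)]
    _ ≤ _ := by
        gcongr
        · refine (lintegral_prod_mul (f := ψ) (g := fun y => ψ (y - z)) (by fun_prop)
            (by fun_prop)).trans_le ?_
          rw [lintegral_sub_right_eq_self, sq]
        · refine (lintegral_prod_mul_inv_norm_sq_le hψ_meas (by fun_prop) hψ_le).trans_eq ?_
          rw [lintegral_sub_right_eq_self]

end HaarMeasure

theorem exponential_decay_cross_term_general
    (C a : ℝ) (ha : 0 < a)
    (φ : R3 → ℂ)
    (hdecay : ∀ x, ‖φ x‖ ≤ C * Real.exp (-a * ‖x‖)) :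
    ∃ K : ℝ, 0 < K ∧ ∀ z : R3, 1 ≤ ‖z‖ →
      ∫⁻ w : R3 × R3,
          ENNReal.ofReal (‖φ w.1‖ ^ 2 * ‖φ (w.2 - z)‖ ^ 2 / ‖w.1 - w.2‖ ^ 2)
        ≤ ENNReal.ofReal (K / ‖z‖ ^ 2) := by
  set B := ∫⁻ x : R3, ENNReal.ofReal (exp (-a * ‖x‖))
  set D := ∫⁻ u : R3 in ball 0 1, ENNReal.ofReal (‖u‖ ^ 2)⁻¹
  set M := 4 * B ^ 2 + ENNReal.ofReal (8 / a ^ 2) * (B * (D + B))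
  have hB : B ≠ ⊤ := (integrable_exp_neg_mul_norm ha).lintegral_lt_top.ne
  have hD : D ≠ ⊤ := (integrableOn_inv_norm_sq_ball (by simp)).lintegral_lt_top.ne
  have hM : M ≠ ⊤ := by finiteness
  refine ⟨C ^ 4 * M.toReal + 1, by positivity, fun z hz => ?_⟩
  rw [Measure.volume_eq_prod]
  calc _ ≤ ENNReal.ofReal (C ^ 4 / ‖z‖ ^ 2) * M :=
        lintegral_cross_term_le (μ := volume) ha hdecay (norm_pos_iff.mp (one_pos.trans_le hz))
    _ = ENNReal.ofReal (C ^ 4 * M.toReal / ‖z‖ ^ 2) := by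
        conv_lhs => rw [← ENNReal.ofReal_toReal hM]
        rw [← ENNReal.ofReal_mul (by positivity), div_mul_eq_mul_div]
    _ ≤ ENNReal.ofReal ((C ^ 4 * M.toReal + 1) / ‖z‖ ^ 2) := by
        gcongr
        linarith

/-- If `|φ(x)| ≤ C e^{−a|x|}`, then the cross term
`∬ |φ(x)|² |φ(y−z)|² / |x−y|² dx dy` decays like `1/|z|²` for `|z| ≥ 1`. -/
theorem exponential_decay_cross_term
    (C a : ℝ) (hC : 0 < C) (ha : 0 < a)
    (φ : R3 → ℂ) (hmeas : Measurable φ)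
    (hdecay : ∀ x, ‖φ x‖ ≤ C * Real.exp (-a * ‖x‖)) :
    ∃ K : ℝ, 0 < K ∧ ∀ z : R3, 1 ≤ ‖z‖ →
      ∫⁻ w : R3 × R3,
          ENNReal.ofReal (‖φ w.1‖ ^ 2 * ‖φ (w.2 - z)‖ ^ 2 / ‖w.1 - w.2‖ ^ 2)
        ≤ ENNReal.ofReal (K / ‖z‖ ^ 2) :=
  exponential_decay_cross_term_general C a ha φ hdecay
end
end
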